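/- arXiv:2212.00077 — 5 statements merged into one kernel-verified Lean document; each statement's English description precedes it below -/
import Mathlib

section
/- Let k be a field, N ≥ 1 and 1 ≤ j ≤ N. An upper unitriangular matrix u ∈ GL_N(k) satisfies w_j·u·w_j⁻¹ ∈ P_{N−1,1}(k) if and only if u_{j,i} = 0 for all i > j. Consequently, every upper unitriangular matrix u ∈ GL_N(k) can be written uniquely as u = u′·u_j(v) with v ∈ k^{N−j} and u′ upper unitriangular satisfying w_j·u′·w_j⁻¹ ∈ P_{N−1,1}(k); i.e. the matrices u_j(v), v ∈ k^{N−j}, form a complete set of representatives for the right cosets (w_j⁻¹P_{N−1,1}(k)w_j ∩ U_N(k))\U_N(k), where U_N(k) is the group of upper unitriangular N×N matrices. -/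
open Matrix

def ParabP (k : Type*) [Field k] (N : ℕ) : Set (Matrix (Fin N) (Fin N) k) :=
  {A | IsUnit A.det ∧ ∀ i j : Fin N, (i : ℕ) = N - 1 → (j : ℕ) ≠ N - 1 → A i j = 0}

def wMat (k : Type*) [Field k] (N j : ℕ) : Matrix (Fin N) (Fin N) k :=
  Matrix.of fun i l =>
    if (l : ℕ) = (if (i : ℕ) + 1 < j then (i : ℕ)
                  else if (i : ℕ) + 1 < N then (i : ℕ) + 1 else j - 1)
    then 1 else 0

def uMat (k : Type*) [Field k] (N j : ℕ) (v : Fin (N - j) → k) : Matrix (Fin N) (Fin N) k :=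
  Matrix.of fun i l =>
    if (i : ℕ) = j - 1 then
      (if (l : ℕ) = j - 1 then 1
       else if h : j ≤ (l : ℕ) then v ⟨(l : ℕ) - j, by have := l.isLt; omega⟩ else 0)
    else if l = i then 1 else 0

def IsUpperUnitriangular {k : Type*} [Field k] {N : ℕ} (A : Matrix (Fin N) (Fin N) k) : Prop :=
  (∀ i, A i i = 1) ∧ ∀ i j : Fin N, (j : ℕ) < (i : ℕ) → A i j = 0

section Aux

variable {k : Type*} [Field k] {N j : ℕ}

/-- The permutation underlying `wMat`. -/
def fIdx (N j : ℕ) (hj1 : 1 ≤ j) (hjN : j ≤ N) (i : Fin N) : Fin N :=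
  ⟨if (i : ℕ) + 1 < j then (i : ℕ) else if (i : ℕ) + 1 < N then (i : ℕ) + 1 else j - 1,
   by have := i.isLt; split_ifs <;> omega⟩

variable (hj1 : 1 ≤ j) (hjN : j ≤ N)
include hj1 hjN

lemma fIdx_val (i : Fin N) : (fIdx N j hj1 hjN i : ℕ) =
    if (i : ℕ) + 1 < j then (i : ℕ) else if (i : ℕ) + 1 < N then (i : ℕ) + 1 else j - 1 := rfl

lemma fIdx_inj : Function.Injective (fIdx N j hj1 hjN) := by
  intro a b hab
  have ha := a.isLt; have hb := b.isLt
  have : (fIdx N j hj1 hjN a : ℕ) = (fIdx N j hj1 hjN b : ℕ) := by rw [hab]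
  simp only [fIdx] at this
  apply Fin.ext
  split_ifs at this <;> omega

lemma wMat_apply (i l : Fin N) :
    wMat k N j i l = if l = fIdx N j hj1 hjN i then 1 else 0 := by
  simp only [wMat, Matrix.of_apply, fIdx, Fin.ext_iff]

lemma wMat_mul_transpose : wMat k N j * (wMat k N j)ᵀ = 1 := by
  ext i l
  rw [Matrix.mul_apply]
  have key : ∀ m : Fin N, wMat k N j i m * (wMat k N j)ᵀ m l =
      if m = fIdx N j hj1 hjN i then (if m = fIdx N j hj1 hjN l then 1 else 0) else 0 := by
    intro m
    rw [Matrix.transpose_apply, wMat_apply hj1 hjN, wMat_apply hj1 hjN]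
    split_ifs <;> ring
  simp only [key]
  rw [Finset.sum_ite_eq' Finset.univ]
  simp only [Finset.mem_univ, if_true]
  by_cases h : i = l
  · subst h; simp [Matrix.one_apply]
  · rw [if_neg fun hc => h (fIdx_inj hj1 hjN hc), Matrix.one_apply_ne h]

lemma wMat_inv : (wMat k N j)⁻¹ = (wMat k N j)ᵀ :=
  Matrix.inv_eq_right_inv (wMat_mul_transpose hj1 hjN)

lemma wMat_mul_apply (A : Matrix (Fin N) (Fin N) k) (i l : Fin N) :
    (wMat k N j * A) i l = A (fIdx N j hj1 hjN i) l := by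
  simp only [Matrix.mul_apply, wMat_apply hj1 hjN, ite_mul, one_mul, zero_mul]
  rw [Finset.sum_ite_eq' Finset.univ (fIdx N j hj1 hjN i)]
  simp

lemma mul_wMat_transpose_apply (A : Matrix (Fin N) (Fin N) k) (i l : Fin N) :
    (A * (wMat k N j)ᵀ) i l = A i (fIdx N j hj1 hjN l) := by
  simp only [Matrix.mul_apply, Matrix.transpose_apply, wMat_apply hj1 hjN, mul_ite, mul_one,
    mul_zero]
  rw [Finset.sum_ite_eq' Finset.univ (fIdx N j hj1 hjN l)]
  simp

lemma conj_apply (A : Matrix (Fin N) (Fin N) k) (i l : Fin N) :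
    (wMat k N j * A * (wMat k N j)ᵀ) i l = A (fIdx N j hj1 hjN i) (fIdx N j hj1 hjN l) := by
  rw [mul_wMat_transpose_apply hj1 hjN, wMat_mul_apply hj1 hjN]

omit hj1 hjN in
lemma unitriangular_det {A : Matrix (Fin N) (Fin N) k} (hA : IsUpperUnitriangular A) :
    A.det = 1 := by
  rw [Matrix.det_of_upperTriangular (fun i l h => hA.2 i l h)]
  simp [hA.1]

omit hj1 hjN in
lemma unitriangular_mul {A B : Matrix (Fin N) (Fin N) k} (hA : IsUpperUnitriangular A)
    (hB : IsUpperUnitriangular B) : IsUpperUnitriangular (A * B) := by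
  constructor
  · intro i
    rw [Matrix.mul_apply, Finset.sum_eq_single i]
    · rw [hA.1, hB.1, one_mul]
    · intro m _ hm
      rcases lt_or_gt_of_ne (fun h : (m:ℕ) = (i:ℕ) => hm (Fin.ext h)) with h | h
      · rw [hA.2 i m h, zero_mul]
      · rw [hB.2 m i h, mul_zero]
    · simp
  · intro i l h
    rw [Matrix.mul_apply]
    apply Finset.sum_eq_zero
    intro m _
    by_cases hm : (m : ℕ) < (i : ℕ)
    · rw [hA.2 i m hm, zero_mul]
    · rw [hB.2 m l (by omega), mul_zero]


lemma mem_iff (hN : 1 ≤ N) (u : Matrix (Fin N) (Fin N) k) (hu : IsUpperUnitriangular u) :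
    wMat k N j * u * (wMat k N j)⁻¹ ∈ ParabP k N ↔
      ∀ i : Fin N, j ≤ (i : ℕ) → u ⟨j - 1, Nat.lt_of_lt_of_le (Nat.sub_lt hj1 Nat.one_pos) hjN⟩ i = 0 := by
  rw [wMat_inv hj1 hjN]
  constructor
  · intro hmem i hi
    have hiN := i.isLt
    have h2 := hmem.2 ⟨N - 1, by omega⟩ ⟨(i : ℕ) - 1, by omega⟩ rfl
      (by show (i : ℕ) - 1 ≠ N - 1; omega)
    rw [conj_apply hj1 hjN] at h2
    rw [show (⟨j - 1, by omega⟩ : Fin N) = fIdx N j hj1 hjN ⟨N - 1, by omega⟩ by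
          simp only [fIdx, Fin.ext_iff]; split_ifs <;> omega,
        show i = fIdx N j hj1 hjN ⟨(i : ℕ) - 1, by omega⟩ by
          simp only [fIdx, Fin.ext_iff]; split_ifs <;> omega]
    exact h2
  · intro hz
    constructor
    · have h1 : (wMat k N j).det * ((wMat k N j)ᵀ).det = 1 := by
        rw [← Matrix.det_mul, wMat_mul_transpose hj1 hjN, Matrix.det_one]
      rw [Matrix.det_mul, Matrix.det_mul, unitriangular_det hu, mul_one, h1]
      exact isUnit_one
    · intro a b ha hb
      rw [conj_apply hj1 hjN]
      have hfa : fIdx N j hj1 hjN a = ⟨j - 1, by omega⟩ := by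
        have := a.isLt
        simp only [fIdx, Fin.ext_iff]; split_ifs <;> omega
      have hfbv := (fIdx N j hj1 hjN b).isLt
      have hfb : (fIdx N j hj1 hjN b : ℕ) ≠ j - 1 := by
        have := b.isLt
        rw [fIdx_val]; split_ifs <;> omega
      rw [hfa]
      by_cases hc : j ≤ (fIdx N j hj1 hjN b : ℕ)
      · exact hz _ hc
      · exact hu.2 _ _ (by show (fIdx N j hj1 hjN b : ℕ) < j - 1; omega)

end Aux

/-- The strictly-upper part of `uMat`. -/
def eMat (k : Type*) [Field k] (N j : ℕ) (v : Fin (N - j) → k) : Matrix (Fin N) (Fin N) k :=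
  Matrix.of fun m l =>
    if (m : ℕ) = j - 1 then
      (if h : j ≤ (l : ℕ) then v ⟨(l : ℕ) - j, by have := l.isLt; omega⟩ else 0)
    else 0

section Aux2

variable {k : Type*} [Field k] {N j : ℕ}
variable (hj1 : 1 ≤ j) (hjN : j ≤ N)
include hj1 hjN

lemma uMat_eq (v : Fin (N - j) → k) : uMat k N j v = 1 + eMat k N j v := by
  ext i l
  simp only [uMat, eMat, Matrix.add_apply, Matrix.one_apply, Matrix.of_apply, Fin.ext_iff]
  split_ifs <;> first | (exfalso; omega) | simp

omit hj1 hjN in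
lemma eMat_add (v w : Fin (N - j) → k) : eMat k N j (v + w) = eMat k N j v + eMat k N j w := by
  ext i l
  simp only [eMat, Matrix.add_apply, Matrix.of_apply, Pi.add_apply]
  split_ifs <;> simp

lemma eMat_zero : eMat k N j (0 : Fin (N - j) → k) = 0 := by
  ext i l
  simp only [eMat, Matrix.of_apply, Matrix.zero_apply, Pi.zero_apply]
  split_ifs <;> rfl

lemma mul_eMat (A : Matrix (Fin N) (Fin N) k) (v : Fin (N - j) → k) (i l : Fin N) :
    (A * eMat k N j v) i l =
      if h : j ≤ (l : ℕ) then
        A i ⟨j - 1, by omega⟩ * v ⟨(l : ℕ) - j, by have := l.isLt; omega⟩ else 0 := by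
  rw [Matrix.mul_apply, Finset.sum_eq_single (⟨j - 1, by omega⟩ : Fin N)]
  · simp only [eMat, Matrix.of_apply]
    simp only [if_true]
    split_ifs <;> simp
  · intro b _ hb
    simp only [eMat, Matrix.of_apply]
    rw [if_neg fun hc => hb (Fin.ext hc), mul_zero]
  · simp

lemma eMat_mul_eMat (v w : Fin (N - j) → k) : eMat k N j v * eMat k N j w = 0 := by
  ext i l
  rw [mul_eMat hj1 hjN]
  split_ifs with h
  · have hle : ¬ j ≤ ((⟨j - 1, by omega⟩ : Fin N) : ℕ) := by show ¬ j ≤ j - 1; omega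
    simp only [eMat, Matrix.of_apply, dif_neg hle, Matrix.zero_apply]
    split_ifs <;> simp
  · simp

lemma uMat_mul_uMat (v w : Fin (N - j) → k) :
    uMat k N j v * uMat k N j w = uMat k N j (v + w) := by
  rw [uMat_eq hj1 hjN, uMat_eq hj1 hjN, uMat_eq hj1 hjN]
  simp only [add_mul, mul_add, one_mul, mul_one, eMat_mul_eMat hj1 hjN, eMat_add, add_zero]
  abel

lemma uMat_zero : uMat k N j (0 : Fin (N - j) → k) = 1 := by
  rw [uMat_eq hj1 hjN, eMat_zero hj1 hjN, add_zero]

lemma uMat_unitriangular (v : Fin (N - j) → k) : IsUpperUnitriangular (uMat k N j v) := by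
  constructor
  · intro i
    simp only [uMat, Matrix.of_apply, Fin.ext_iff]
    split_ifs <;> first | rfl | (exfalso; omega)
  · intro i l h
    simp only [uMat, Matrix.of_apply, Fin.ext_iff]
    split_ifs <;> first | rfl | (exfalso; omega)

lemma mul_uMat_apply (A : Matrix (Fin N) (Fin N) k) (v : Fin (N - j) → k) (i l : Fin N) :
    (A * uMat k N j v) i l = A i l +
      (if h : j ≤ (l : ℕ) then
        A i ⟨j - 1, by omega⟩ * v ⟨(l : ℕ) - j, by have := l.isLt; omega⟩ else 0) := by
  rw [uMat_eq hj1 hjN, mul_add, mul_one, Matrix.add_apply, mul_eMat hj1 hjN]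

end Aux2


/-- For `u` upper unitriangular, `w_j·u·w_j⁻¹ ∈ P_{N−1,1}(k)` iff `u_{j,i} = 0` for all
`i > j`; consequently every upper unitriangular `u` can be written uniquely as
`u = u′·u_j(v)` with `w_j·u′·w_j⁻¹ ∈ P_{N−1,1}(k)`. -/
theorem statement2 (k : Type*) [Field k] (N j : ℕ) (hN : 1 ≤ N) (hj1 : 1 ≤ j) (hjN : j ≤ N)
    (u : Matrix (Fin N) (Fin N) k) (hu : IsUpperUnitriangular u) :
    (wMat k N j * u * (wMat k N j)⁻¹ ∈ ParabP k N ↔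
      ∀ i : Fin N, j ≤ (i : ℕ) → u ⟨j - 1, by omega⟩ i = 0) ∧
    (∃! p : Matrix (Fin N) (Fin N) k × (Fin (N - j) → k),
      IsUpperUnitriangular p.1 ∧ wMat k N j * p.1 * (wMat k N j)⁻¹ ∈ ParabP k N ∧
      u = p.1 * uMat k N j p.2) := by
  refine ⟨mem_iff hj1 hjN hN u hu, ?_⟩
  set v : Fin (N - j) → k :=
    fun m => u ⟨j - 1, by omega⟩ ⟨j + (m : ℕ), by have := m.isLt; omega⟩ with hv
  have hu' : IsUpperUnitriangular (u * uMat k N j (-v)) :=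
    unitriangular_mul hu (uMat_unitriangular hj1 hjN (-v))
  have hrow : ∀ i : Fin N, j ≤ (i : ℕ) →
      (u * uMat k N j (-v)) ⟨j - 1, by omega⟩ i = 0 := by
    intro i hi
    rw [mul_uMat_apply hj1 hjN, dif_pos hi, hu.1, one_mul, Pi.neg_apply]
    have : (⟨j + ((i : ℕ) - j), by have := i.isLt; omega⟩ : Fin N) = i := by
      apply Fin.ext; show j + ((i : ℕ) - j) = (i : ℕ); omega
    rw [hv]
    simp only [this]
    ring
  refine ⟨⟨u * uMat k N j (-v), v⟩, ⟨hu', ?_, ?_⟩, ?_⟩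
  · exact (mem_iff hj1 hjN hN _ hu').mpr hrow
  · rw [mul_assoc, uMat_mul_uMat hj1 hjN, neg_add_cancel, uMat_zero hj1 hjN, mul_one]
  · rintro ⟨u₁, v₁⟩ ⟨h1, h2, h3⟩
    dsimp only at h1 h2 h3
    have hz := (mem_iff hj1 hjN hN u₁ h1).mp h2
    have hv1 : v₁ = v := by
      funext m
      have hm := m.isLt
      have := congrFun (congrFun h3 ⟨j - 1, by omega⟩) ⟨j + (m : ℕ), by omega⟩
      rw [mul_uMat_apply hj1 hjN, dif_pos (by show j ≤ j + (m : ℕ); omega), h1.1, one_mul,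
        hz _ (by show j ≤ j + (m : ℕ); omega), zero_add] at this
      have hidx : (⟨j + (m : ℕ) - j, by omega⟩ : Fin (N - j)) = m := by
        apply Fin.ext; show j + (m : ℕ) - j = (m : ℕ); omega
      rw [hidx] at this
      rw [hv]
      exact this.symm
    have hu1 : u₁ = u * uMat k N j (-v) := by
      rw [h3, hv1, mul_assoc, uMat_mul_uMat hj1 hjN, add_neg_cancel, uMat_zero hj1 hjN, mul_one]
    simp only [Prod.mk.injEq]
    exact ⟨hu1, hv1⟩
end

section
/- Let k be a field, m, n ≥ 1, and let R ∈ M_{m×n}(k) with R_{1,1} = 1. Let h ∈ H_{1,m−1}(k) and g ∈ H_{1,n−1}(k). Then (hᵀ R g)_{1,1} = 1 and w_1·U(R)·t(h,g) ∈ P_{mn−1,1}(k)·w_1·U(hᵀ R g); that is, the right cosets P_{mn−1,1}(k)·w_1·U(R)·t(h,g) and P_{mn−1,1}(k)·w_1·U(hᵀ R g) coincide. -/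
open Matrix Kronecker

/-- Kronecker product of square matrices, realized on `Fin (m * n)`:
the `(i,j)` block of size `n` is `h i j • g`. -/
def kron {k : Type*} [Field k] {m n : ℕ} (h : Matrix (Fin m) (Fin m) k)
    (g : Matrix (Fin n) (Fin n) k) : Matrix (Fin (m * n)) (Fin (m * n)) k :=
  Matrix.of fun x y => h x.divNat y.divNat * g x.modNat y.modNat

/-- `w_1 ∈ GL_{mn}(k)`: the permutation matrix with block rows `((0,I_{mn−1}),(1,0))`;
this is the case `j = 1` of the matrices `w_j`. -/
def wMatOne (k : Type*) [Field k] (N : ℕ) : Matrix (Fin N) (Fin N) k :=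
  Matrix.of fun i l =>
    if (l : ℕ) = (if (i : ℕ) + 1 < N then (i : ℕ) + 1 else 0) then 1 else 0

/-- `U(X)` for `X ∈ M_{m×n}(k)`: the identity except that the first row is the concatenation
of the rows of `X`, i.e. `U(X)_{1,(i−1)n+j} = X_{i,j}`. -/
def uFirstRow {k : Type*} [Field k] {m n : ℕ} (X : Matrix (Fin m) (Fin n) k) :
    Matrix (Fin (m * n)) (Fin (m * n)) k :=
  Matrix.of fun i l => if (i : ℕ) = 0 then X l.divNat l.modNat else if l = i then 1 else 0

/-- `H_{1,ℓ−1}(k)`: invertible `ℓ × ℓ` matrices of the form `((1,x),(0,A))`,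
i.e. whose first column is `(1,0,…,0)ᵀ`. -/
def Hmir (k : Type*) [Field k] (l : ℕ) : Set (Matrix (Fin l) (Fin l) k) :=
  {A | IsUnit A.det ∧ ∀ i j : Fin l, (j : ℕ) = 0 →
    A i j = if (i : ℕ) = 0 then 1 else 0}

section Aux
variable {k : Type*} [Field k] {m n : ℕ}

lemma fin_nz (l : Fin (m * n)) (hl : (l : ℕ) ≠ 0) :
    ¬((l.divNat : ℕ) = 0 ∧ (l.modNat : ℕ) = 0) := by
  rintro ⟨h1, h2⟩
  rw [Fin.coe_divNat] at h1
  rw [Fin.coe_modNat] at h2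
  have h3 : n * ((l : ℕ) / n) + (l : ℕ) % n = (l : ℕ) := Nat.div_add_mod _ _
  rw [h1, h2, mul_zero, add_zero] at h3
  exact hl h3.symm

lemma divNat_zero (hm : 0 < m) (hn : 0 < n) (hN : 0 < m * n) :
    ((⟨0, hN⟩ : Fin (m * n)).divNat = ⟨0, hm⟩) ∧ ((⟨0, hN⟩ : Fin (m * n)).modNat = ⟨0, hn⟩) := by
  constructor <;> apply Fin.val_injective <;> simp [Fin.coe_divNat, Fin.coe_modNat]

lemma sum_delta0 {l : ℕ} (hl : 0 < l) (f : Fin l → k) :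
    ∑ b : Fin l, f b * (if (b : ℕ) = 0 then 1 else 0) = f ⟨0, hl⟩ := by
  rw [Finset.sum_eq_single (⟨0, hl⟩ : Fin l)]
  · simp
  · intro b _ hb
    have : (b : ℕ) ≠ 0 := fun hc => hb (Fin.val_injective hc)
    simp [this]
  · simp

lemma sum_delta0' {l : ℕ} (hl : 0 < l) (f : Fin l → k) :
    ∑ b : Fin l, (if (b : ℕ) = 0 then 1 else 0) * f b = f ⟨0, hl⟩ := by
  simp_rw [mul_comm]; exact sum_delta0 hl f

lemma uEntry (X : Matrix (Fin m) (Fin n) k) (c l : Fin (m * n)) :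
    uFirstRow X c l = (if c = l then 1 else 0)
      + (if (c : ℕ) = 0 then 1 else 0) * (X l.divNat l.modNat - if (l : ℕ) = 0 then 1 else 0) := by
  simp only [uFirstRow, of_apply]
  by_cases hc : (c : ℕ) = 0
  · simp only [hc, if_true, one_mul]
    by_cases hl : (l : ℕ) = 0
    · have hcl : c = l := Fin.val_injective (by omega)
      simp [hcl, hl]
    · have hcl : c ≠ l := fun hce => hl (by rw [← hce]; exact hc)
      simp [hcl, hl]
  · simp only [hc, if_false, zero_mul, add_zero]
    simp [eq_comm]

lemma rowMulU (hm : 0 < m) (hn : 0 < n) (Y : Matrix (Fin m) (Fin n) k)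
    (f : Fin (m * n) → k) (l : Fin (m * n)) :
    ∑ c, f c * uFirstRow Y c l
      = f l + f ⟨0, Nat.mul_pos hm hn⟩ *
          (Y l.divNat l.modNat - if (l : ℕ) = 0 then 1 else 0) := by
  simp_rw [uEntry, mul_add]
  rw [Finset.sum_add_distrib]
  congr 1
  · simp [mul_ite, Finset.sum_ite_eq']
  · have hstep : ∀ c : Fin (m * n),
        f c * ((if (c : ℕ) = 0 then (1:k) else 0) * (Y l.divNat l.modNat - if (l : ℕ) = 0 then 1 else 0))
        = (f c * (if (c : ℕ) = 0 then 1 else 0)) * (Y l.divNat l.modNat - if (l : ℕ) = 0 then 1 else 0) :=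
      fun c => by ring
    simp_rw [hstep]
    rw [← Finset.sum_mul, sum_delta0 (Nat.mul_pos hm hn) f]

lemma uMul (hm : 0 < m) (hn : 0 < n) (X Y : Matrix (Fin m) (Fin n) k)
    (hX : X ⟨0, hm⟩ ⟨0, hn⟩ = 1) (hY : Y ⟨0, hm⟩ ⟨0, hn⟩ = 1)
    (hneg : ∀ (a : Fin m) (b : Fin n), ¬((a : ℕ) = 0 ∧ (b : ℕ) = 0) → Y a b = - X a b) :
    uFirstRow X * uFirstRow Y = 1 := by
  have hN : 0 < m * n := Nat.mul_pos hm hn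
  ext i l
  rw [mul_apply]
  by_cases hi : (i : ℕ) = 0
  · have hrow : ∀ c, uFirstRow X i c = X c.divNat c.modNat := by
      intro c; simp [uFirstRow, hi]
    simp_rw [hrow]
    rw [rowMulU hm hn Y (fun c => X c.divNat c.modNat) l]
    rw [(divNat_zero hm hn hN).1, (divNat_zero hm hn hN).2, hX, one_mul]
    by_cases hl : (l : ℕ) = 0
    · have hl0 : l = ⟨0, hN⟩ := Fin.val_injective hl
      have hi0 : i = ⟨0, hN⟩ := Fin.val_injective hi
      subst hl0
      rw [hi0, (divNat_zero hm hn hN).1, (divNat_zero hm hn hN).2, hX, hY, one_apply_eq]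
      simp
    · have hil : i ≠ l := fun hce => hl (by rw [← hce]; exact hi)
      rw [hneg _ _ (fin_nz l hl), if_neg hl, one_apply_ne hil]
      ring
  · have hrow : ∀ c, uFirstRow X i c = if c = i then 1 else 0 := by
      intro c; simp [uFirstRow, hi]
    simp_rw [hrow, ite_mul, one_mul, zero_mul]
    rw [Finset.sum_ite_eq' Finset.univ i (fun c => uFirstRow Y c l)]
    by_cases hil : i = l
    · subst hil
      simp [uFirstRow, hi, one_apply]
    · have : l ≠ i := fun hc => hil hc.symm
      simp [uFirstRow, hi, this, one_apply_ne hil]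

/-- The "inverse-fixing" matrix: entry `(0,0)` is `1`, others are negated. -/
def negFix (X : Matrix (Fin m) (Fin n) k) : Matrix (Fin m) (Fin n) k :=
  Matrix.of fun a b => if (a : ℕ) = 0 ∧ (b : ℕ) = 0 then 1 else -X a b

lemma negFix00 (X : Matrix (Fin m) (Fin n) k) (hm : 0 < m) (hn : 0 < n) :
    negFix X ⟨0, hm⟩ ⟨0, hn⟩ = 1 := by simp [negFix]

lemma u_mul_uNeg (hm : 0 < m) (hn : 0 < n) (X : Matrix (Fin m) (Fin n) k)
    (hX : X ⟨0, hm⟩ ⟨0, hn⟩ = 1) : uFirstRow X * uFirstRow (negFix X) = 1 :=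
  uMul hm hn X (negFix X) hX (negFix00 X hm hn)
    (fun a b hab => by simp only [negFix, of_apply, if_neg hab])

lemma uNeg_mul_u (hm : 0 < m) (hn : 0 < n) (X : Matrix (Fin m) (Fin n) k)
    (hX : X ⟨0, hm⟩ ⟨0, hn⟩ = 1) : uFirstRow (negFix X) * uFirstRow X = 1 :=
  mul_eq_one_comm.mp (u_mul_uNeg hm hn X hX)

lemma finProd_divNat (p : Fin m × Fin n) :
    (finProdFinEquiv p).divNat = p.1 ∧ (finProdFinEquiv p).modNat = p.2 := by
  have h0 := finProdFinEquiv.symm_apply_apply p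
  rw [finProdFinEquiv_symm_apply] at h0
  exact ⟨congrArg Prod.fst h0, congrArg Prod.snd h0⟩

lemma kron_eq (h : Matrix (Fin m) (Fin m) k) (g : Matrix (Fin n) (Fin n) k) :
    kron h g = Matrix.reindex finProdFinEquiv finProdFinEquiv (h ⊗ₖ g) := by
  ext x y
  simp [kron, reindex_apply, submatrix_apply, finProdFinEquiv_symm_apply, kroneckerMap_apply]

lemma kron_det_isUnit {h : Matrix (Fin m) (Fin m) k} {g : Matrix (Fin n) (Fin n) k}
    (hh : IsUnit h.det) (hg : IsUnit g.det) : IsUnit (kron h g).det := by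
  rw [kron_eq, det_reindex_self, det_kronecker]
  exact (hh.pow _).mul (hg.pow _)

lemma rowUT (hm : 0 < m) (hn : 0 < n) (R : Matrix (Fin m) (Fin n) k)
    (h : Matrix (Fin m) (Fin m) k) (g : Matrix (Fin n) (Fin n) k) (l : Fin (m * n)) :
    (uFirstRow R * kron h g) ⟨0, Nat.mul_pos hm hn⟩ l
      = (hᵀ * R * g) l.divNat l.modNat := by
  rw [mul_apply]
  have hrow : ∀ c : Fin (m * n),
      uFirstRow R (⟨0, Nat.mul_pos hm hn⟩ : Fin (m * n)) c * kron h g c l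
        = R c.divNat c.modNat * (h c.divNat l.divNat * g c.modNat l.modNat) := by
    intro c; simp [uFirstRow, kron]
  simp_rw [hrow]
  rw [← Fintype.sum_equiv finProdFinEquiv
      (fun p : Fin m × Fin n => R p.1 p.2 * (h p.1 l.divNat * g p.2 l.modNat))
      (fun c : Fin (m * n) => R c.divNat c.modNat * (h c.divNat l.divNat * g c.modNat l.modNat))
      (fun p => by simp only [(finProd_divNat p).1, (finProd_divNat p).2])]
  rw [Fintype.sum_prod_type]
  rw [mul_apply]
  simp_rw [mul_apply, transpose_apply, Finset.sum_mul]
  rw [Finset.sum_comm]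
  congr 1; ext a; congr 1; ext b; ring

lemma rowM (hm : 0 < m) (hn : 0 < n) (R : Matrix (Fin m) (Fin n) k)
    (h : Matrix (Fin m) (Fin m) k) (g : Matrix (Fin n) (Fin n) k)
    (hfirst : (hᵀ * R * g) ⟨0, hm⟩ ⟨0, hn⟩ = 1) (l : Fin (m * n)) :
    (uFirstRow R * kron h g * uFirstRow (negFix (hᵀ * R * g))) ⟨0, Nat.mul_pos hm hn⟩ l
      = if (l : ℕ) = 0 then 1 else 0 := by
  have hN : 0 < m * n := Nat.mul_pos hm hn
  rw [mul_apply]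
  simp_rw [rowUT hm hn R h g]
  rw [rowMulU hm hn (negFix (hᵀ * R * g)) (fun c => (hᵀ * R * g) c.divNat c.modNat) l]
  rw [(divNat_zero hm hn hN).1, (divNat_zero hm hn hN).2, hfirst, one_mul]
  by_cases hl : (l : ℕ) = 0
  · have hl0 : l = ⟨0, hN⟩ := Fin.val_injective hl
    subst hl0
    rw [(divNat_zero hm hn hN).1, (divNat_zero hm hn hN).2, hfirst, negFix00 _ hm hn]
    norm_num
  · rw [if_neg hl]
    simp only [negFix, of_apply, if_neg (fin_nz l hl)]
    ring

end Aux

section AuxW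
variable {k : Type*} [Field k] {N : ℕ}

lemma w_mul_wT (hN : 0 < N) : wMatOne k N * (wMatOne k N)ᵀ = 1 := by
  ext i j
  rw [mul_apply]
  simp only [wMatOne, transpose_apply, of_apply]
  set vi := if (i : ℕ) + 1 < N then (i : ℕ) + 1 else 0 with hvi
  set vj := if (j : ℕ) + 1 < N then (j : ℕ) + 1 else 0 with hvj
  have hvi' : vi < N := by rw [hvi]; split_ifs <;> omega
  rw [Finset.sum_eq_single (⟨vi, hvi'⟩ : Fin N)]
  · simp only [if_pos rfl, one_mul]
    by_cases hij : i = j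
    · subst hij; simp [one_apply]; rfl
    · have h1 : vi ≠ vj := by
        have h2 : (i : ℕ) ≠ (j : ℕ) := fun hc => hij (Fin.val_injective hc)
        have h3 := i.isLt; have h4 := j.isLt
        rw [hvi, hvj]; split_ifs <;> omega
      simp [h1, one_apply_ne hij]
  · intro b _ hb
    have : (b : ℕ) ≠ vi := fun hc => hb (Fin.val_injective hc)
    simp [this]
  · simp

lemma wT_mul_w (hN : 0 < N) : (wMatOne k N)ᵀ * wMatOne k N = 1 :=
  mul_eq_one_comm.mp (w_mul_wT hN)

lemma w_last_row (hN : 0 < N) (i : Fin N) (hi : (i : ℕ) = N - 1) (l : Fin N) :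
    wMatOne k N i l = if (l : ℕ) = 0 then 1 else 0 := by
  have h1 : ¬ ((i : ℕ) + 1 < N) := by omega
  simp [wMatOne, h1]

lemma parab_mul {p q : Matrix (Fin N) (Fin N) k} (hp : p ∈ ParabP k N) (hq : q ∈ ParabP k N) :
    p * q ∈ ParabP k N := by
  refine ⟨by rw [det_mul]; exact hp.1.mul hq.1, ?_⟩
  intro i j hi hj
  rw [mul_apply]
  apply Finset.sum_eq_zero
  intro l _
  by_cases hl : (l : ℕ) = N - 1
  · rw [hq.2 l j hl hj, mul_zero]
  · rw [hp.2 i l hi hl, zero_mul]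

lemma parab_inv (hN : 0 < N) {p : Matrix (Fin N) (Fin N) k} (hp : p ∈ ParabP k N) :
    p⁻¹ ∈ ParabP k N := by
  refine ⟨Matrix.isUnit_nonsing_inv_det p hp.1, ?_⟩
  have hNN : N - 1 < N := by omega
  set iN : Fin N := ⟨N - 1, hNN⟩ with hiN
  have hd : p iN iN ≠ 0 := by
    intro hc
    have hz : ∀ j, p iN j = 0 := by
      intro j
      by_cases hj : (j : ℕ) = N - 1
      · rwa [show j = iN from Fin.val_injective hj]
      · exact hp.2 iN j rfl hj
    have h0 := Matrix.det_eq_zero_of_row_eq_zero iN hz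
    have h5 := hp.1
    rw [h0] at h5
    simp at h5
  intro i j hi hj
  have hii : i = iN := Fin.val_injective hi
  subst hii
  have h1 : (p * p⁻¹) iN j = 0 := by
    rw [Matrix.mul_nonsing_inv p hp.1]
    exact one_apply_ne (fun hc => hj (by rw [← hc]))
  rw [mul_apply, Finset.sum_eq_single iN] at h1
  · exact (mul_eq_zero.mp h1).resolve_left hd
  · intro b _ hb
    have : (b : ℕ) ≠ N - 1 := fun hc => hb (Fin.val_injective hc)
    rw [hp.2 iN b rfl this, zero_mul]
  · simp

end AuxW

/-- For `R ∈ M_{m×n}(k)` with `R_{1,1} = 1`, `h ∈ H_{1,m−1}(k)`, `g ∈ H_{1,n−1}(k)`: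
`(hᵀRg)_{1,1} = 1` and the right cosets `P_{mn−1,1}(k)·w_1·U(R)·t(h,g)` and
`P_{mn−1,1}(k)·w_1·U(hᵀRg)` coincide. -/
theorem statement3 (k : Type*) [Field k] (m n : ℕ) (hm : 0 < m) (hn : 0 < n)
    (R : Matrix (Fin m) (Fin n) k) (hR : R ⟨0, hm⟩ ⟨0, hn⟩ = 1)
    (h : Matrix (Fin m) (Fin m) k) (hh : h ∈ Hmir k m)
    (g : Matrix (Fin n) (Fin n) k) (hg : g ∈ Hmir k n) :
    (h.transpose * R * g) ⟨0, hm⟩ ⟨0, hn⟩ = 1 ∧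
    {X | ∃ p ∈ ParabP k (m * n), X = p * (wMatOne k (m * n) * uFirstRow R * kron h g)} =
      {X | ∃ p ∈ ParabP k (m * n),
        X = p * (wMatOne k (m * n) * uFirstRow (h.transpose * R * g))} := by
  have hN : 0 < m * n := Nat.mul_pos hm hn
  have hcolg : ∀ b, g b ⟨0, hn⟩ = if (b : ℕ) = 0 then 1 else 0 := fun b => hg.2 b ⟨0, hn⟩ rfl
  have hcolh : ∀ a, h a ⟨0, hm⟩ = if (a : ℕ) = 0 then 1 else 0 := fun a => hh.2 a ⟨0, hm⟩ rfl
  have first00 : (h.transpose * R * g) ⟨0, hm⟩ ⟨0, hn⟩ = 1 := by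
    rw [mul_apply]
    simp_rw [hcolg]
    rw [sum_delta0 hn (fun b => (h.transpose * R) ⟨0, hm⟩ b)]
    rw [mul_apply]
    simp_rw [transpose_apply, hcolh]
    rw [sum_delta0' hm (fun a => R a ⟨0, hn⟩)]
    exact hR
  refine ⟨first00, ?_⟩
  -- abbreviations
  have hUU : uFirstRow (negFix (hᵀ * R * g)) * uFirstRow (hᵀ * R * g) = 1 :=
    uNeg_mul_u hm hn _ first00
  have hUU' : uFirstRow (hᵀ * R * g) * uFirstRow (negFix (hᵀ * R * g)) = 1 :=
    u_mul_uNeg hm hn _ first00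
  have hdetUR : IsUnit (uFirstRow R).det :=
    IsUnit.of_mul_eq_one _ (by rw [← det_mul, u_mul_uNeg hm hn R hR, det_one])
  have hdetUY : IsUnit (uFirstRow (negFix (hᵀ * R * g))).det :=
    IsUnit.of_mul_eq_one _ (by rw [← det_mul, hUU, det_one])
  have hdetW : IsUnit (wMatOne k (m * n)).det :=
    IsUnit.of_mul_eq_one _ (by rw [← det_mul, w_mul_wT hN, det_one])
  have hdetWT : IsUnit ((wMatOne k (m * n))ᵀ).det := by
    rw [det_transpose]; exact hdetW
  have hdetT : IsUnit (kron h g).det := kron_det_isUnit hh.1 hg.1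
  set p0 : Matrix (Fin (m * n)) (Fin (m * n)) k :=
    wMatOne k (m * n) *
      ((uFirstRow R * kron h g * uFirstRow (negFix (hᵀ * R * g))) * (wMatOne k (m * n))ᵀ)
    with hp0def
  have hp0P : p0 ∈ ParabP k (m * n) := by
    constructor
    · rw [hp0def]
      simp only [det_mul]
      exact hdetW.mul (((hdetUR.mul hdetT).mul hdetUY).mul hdetWT)
    · intro i j hi hj
      rw [hp0def, mul_apply]
      simp_rw [w_last_row hN i hi]
      rw [sum_delta0' hN]
      rw [mul_apply]
      simp_rw [rowM hm hn R h g first00]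
      rw [sum_delta0' hN (fun l => (wMatOne k (m * n))ᵀ l j)]
      rw [transpose_apply]
      have hjlt : (j : ℕ) + 1 < m * n := by
        have := j.isLt; omega
      simp [wMatOne, hjlt]
  have hkey : p0 * (wMatOne k (m * n) * uFirstRow (hᵀ * R * g))
      = wMatOne k (m * n) * uFirstRow R * kron h g := by
    rw [hp0def]
    simp only [mul_assoc]
    rw [show (wMatOne k (m * n))ᵀ * (wMatOne k (m * n) * uFirstRow (hᵀ * R * g))
        = uFirstRow (hᵀ * R * g) from by rw [← mul_assoc, wT_mul_w hN, one_mul]]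
    rw [hUU, mul_one]
  ext X
  simp only [Set.mem_setOf_eq]
  constructor
  · rintro ⟨p, hp, rfl⟩
    refine ⟨p * p0, parab_mul hp hp0P, ?_⟩
    rw [mul_assoc p p0, hkey]
  · rintro ⟨p, hp, rfl⟩
    refine ⟨p * p0⁻¹, parab_mul hp (parab_inv hN hp0P), ?_⟩
    rw [mul_assoc p p0⁻¹, ← hkey, ← mul_assoc p0⁻¹, Matrix.nonsing_inv_mul p0 hp0P.1, one_mul]
end

section
/- Let k be a field, m, n ≥ 1, and let R ∈ M_{m×n}(k) with R_{1,1} = 1 and rank(R) = r+1. Then there exist h₀ ∈ H_{1,m−1}(k) and g₀ ∈ H_{1,n−1}(k) such that h₀ᵀ·R·g₀ is the block matrix ((I_{r+1}, 0),(0, 0)) ∈ M_{m×n}(k) with identity block I_{r+1} in the top-left corner and zeros elsewhere. -/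
open Matrix

set_option maxHeartbeats 1000000

private def Emat (k : Type*) [Field k] (m n s : ℕ) : Matrix (Fin m) (Fin n) k :=
  Matrix.of (fun (i : Fin m) (j : Fin n) =>
    if (i : ℕ) = (j : ℕ) ∧ (i : ℕ) < s then (1 : k) else 0)

private lemma Emat_rank (k : Type*) [Field k] {m n s : ℕ} (hsm : s ≤ m) (hsn : s ≤ n) :
    (Emat k m n s).rank = s := by
  classical
  have hcol : ∀ j : Fin n, (Emat k m n s)ᵀ j =
      if h : (j : ℕ) < s then Pi.single (⟨(j : ℕ), lt_of_lt_of_le h hsm⟩ : Fin m) (1 : k)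
      else 0 := by
    intro j
    funext i
    by_cases h : (j : ℕ) < s
    · simp only [transpose_apply, Emat, of_apply, dif_pos h, Pi.single_apply]
      by_cases hij : (i : ℕ) = (j : ℕ)
      · have : i = (⟨(j : ℕ), lt_of_lt_of_le h hsm⟩ : Fin m) := Fin.ext hij
        simp [this, hij, lt_of_le_of_lt (le_of_eq hij) h, h]
      · have : i ≠ (⟨(j : ℕ), lt_of_lt_of_le h hsm⟩ : Fin m) := by
          intro hc; exact hij (by simpa using congrArg Fin.val hc)
        simp [hij, this]
    · simp only [transpose_apply, Emat, of_apply, dif_neg h, Pi.zero_apply]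
      have : ¬ ((i : ℕ) = (j : ℕ) ∧ (i : ℕ) < s) := by
        rintro ⟨h1, h2⟩; exact h (h1 ▸ h2)
      simp [this]
  set g : Fin s → (Fin m → k) := fun j => Pi.single (⟨(j : ℕ), lt_of_lt_of_le j.isLt hsm⟩ : Fin m) 1 with hg
  have hspan : Submodule.span k (Set.range (Emat k m n s)ᵀ) = Submodule.span k (Set.range g) := by
    apply le_antisymm
    · rw [Submodule.span_le]
      rintro _ ⟨j, rfl⟩
      rw [hcol j]
      by_cases h : (j : ℕ) < s
      · rw [dif_pos h]
        exact Submodule.subset_span ⟨⟨(j : ℕ), h⟩, rfl⟩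
      · rw [dif_neg h]; exact Submodule.zero_mem _
    · rw [Submodule.span_le]
      rintro _ ⟨j, rfl⟩
      have hjn : (j : ℕ) < n := lt_of_lt_of_le j.isLt hsn
      have := hcol ⟨(j : ℕ), hjn⟩
      rw [dif_pos (by simpa using j.isLt)] at this
      refine Submodule.subset_span ⟨⟨(j : ℕ), hjn⟩, ?_⟩
      rw [this]
  have hgi : LinearIndependent k g := by
    have h1 : LinearIndependent k (fun i : Fin m => Pi.single i (1 : k)) := by
      have := (Pi.basisFun k (Fin m)).linearIndependent
      rwa [show ⇑(Pi.basisFun k (Fin m)) = fun i : Fin m => Pi.single i (1 : k) from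
        funext fun i => Pi.basisFun_apply k (Fin m) i] at this
    exact h1.comp (fun j => ⟨j.1, lt_of_lt_of_le j.2 hsm⟩)
      (fun a b hab => Fin.ext (by simpa using congrArg Fin.val hab))
  rw [Matrix.rank_eq_finrank_span_cols, Matrix.col, hspan, finrank_span_eq_card hgi]
  simp

private lemma exists_PQ {k : Type*} [Field k] {m n : ℕ} (M : Matrix (Fin m) (Fin n) k) :
    ∃ P : Matrix (Fin m) (Fin m) k, IsUnit P.det ∧
      ∃ Q : Matrix (Fin n) (Fin n) k, IsUnit Q.det ∧
        P * M * Q = Emat k m n M.rank := by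
  classical
  set bn := Pi.basisFun k (Fin n) with hbn
  set bm := Pi.basisFun k (Fin m) with hbm
  set f : (Fin n → k) →ₗ[k] (Fin m → k) := Matrix.toLin bn bm M with hf
  set r := M.rank with hrdef
  have hr : Module.finrank k (LinearMap.range f) = r :=
    (Matrix.rank_eq_finrank_range_toLin M bm bn).symm
  have hfinn : Module.finrank k (Fin n → k) = n := by simp
  have hfinm : Module.finrank k (Fin m → k) = m := by simp
  have hrn : r + Module.finrank k (LinearMap.ker f) = n := by
    rw [← hr, LinearMap.finrank_range_add_finrank_ker f, hfinn]
  have hrlen : r ≤ n := by omega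
  have hrlem : r ≤ m := by
    have h1 := Submodule.finrank_le (LinearMap.range f)
    rw [hfinm, hr] at h1; exact h1
  have hker : Module.finrank k (LinearMap.ker f) = n - r := by omega
  obtain ⟨W, hW⟩ := Submodule.exists_isCompl (LinearMap.ker f)
  have hWr : Module.finrank k W = r := by
    have h2 := Submodule.finrank_add_eq_of_isCompl hW
    rw [hfinn] at h2; omega
  let bW : Module.Basis (Fin r) k W := Module.finBasisOfFinrankEq k W hWr
  let bK : Module.Basis (Fin (n - r)) k (LinearMap.ker f) :=
    Module.finBasisOfFinrankEq k _ hker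
  let eV : (W × LinearMap.ker f) ≃ₗ[k] (Fin n → k) :=
    Submodule.prodEquivOfIsCompl _ _ hW.symm
  let en : Fin r ⊕ Fin (n - r) ≃ Fin n := finSumFinEquiv.trans (finCongr (by omega))
  let b : Module.Basis (Fin n) k (Fin n → k) := ((bW.prod bK).map eV).reindex en
  have hb_lt : ∀ (j : Fin n) (hj : (j : ℕ) < r),
      b j = ((bW ⟨(j : ℕ), hj⟩ : W) : Fin n → k) := by
    intro j hj
    have he0 : en (Sum.inl ⟨(j : ℕ), hj⟩) = j := by apply Fin.ext; simp [en]
    have he : en.symm j = Sum.inl ⟨(j : ℕ), hj⟩ := en.symm_apply_eq.mpr he0.symm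
    rw [Module.Basis.reindex_apply, he, Module.Basis.map_apply]
    have hp : (bW.prod bK) (Sum.inl ⟨(j : ℕ), hj⟩) = (bW ⟨(j : ℕ), hj⟩, 0) :=
      Prod.ext (Module.Basis.prod_apply_inl_fst _ _ _) (Module.Basis.prod_apply_inl_snd _ _ _)
    rw [hp, Submodule.coe_prodEquivOfIsCompl']
    simp
  have hb_ge : ∀ (j : Fin n), ¬ (j : ℕ) < r → b j ∈ LinearMap.ker f := by
    intro j hj
    have hjr : r + ((j : ℕ) - r) = (j : ℕ) := by omega
    have hjlt : (j : ℕ) - r < n - r := by omega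
    have he0 : en (Sum.inr ⟨(j : ℕ) - r, hjlt⟩) = j := by
      apply Fin.ext; simp [en]; omega
    have he : en.symm j = Sum.inr ⟨(j : ℕ) - r, hjlt⟩ := en.symm_apply_eq.mpr he0.symm
    rw [Module.Basis.reindex_apply, he, Module.Basis.map_apply]
    have hp : (bW.prod bK) (Sum.inr ⟨(j : ℕ) - r, hjlt⟩) = (0, bK ⟨(j : ℕ) - r, hjlt⟩) :=
      Prod.ext (Module.Basis.prod_apply_inr_fst _ _ _) (Module.Basis.prod_apply_inr_snd _ _ _)
    rw [hp, Submodule.coe_prodEquivOfIsCompl']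
    simpa using (bK ⟨(j : ℕ) - r, hjlt⟩).2
  -- the image vectors
  set u : Fin r → (Fin m → k) := fun i => f ((bW i : W) : Fin n → k) with hu_def
  have hu : LinearIndependent k u := by
    have hw : LinearIndependent k (fun i => ((bW i : W) : Fin n → k)) :=
      bW.linearIndependent.map' W.subtype (Submodule.ker_subtype W)
    have hle : Submodule.span k (Set.range fun i => ((bW i : W) : Fin n → k)) ≤ W := by
      rw [Submodule.span_le]; rintro _ ⟨i, rfl⟩; exact (bW i).2
    exact hw.map (Disjoint.mono_left hle hW.symm.disjoint)
  set ur : Fin r → (LinearMap.range f) := fun i => ⟨u i, LinearMap.mem_range_self f _⟩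
    with hur_def
  have hur : LinearIndependent k ur := by
    have hcomp : u = (LinearMap.range f).subtype ∘ ur := rfl
    exact LinearIndependent.of_comp (LinearMap.range f).subtype (hcomp ▸ hu)
  have hcards : Fintype.card (Fin r) = Module.finrank k (LinearMap.range f) := by
    simp [hr]
  have hspan_ur : Submodule.span k (Set.range ur) = ⊤ :=
    hur.span_eq_top_of_card_eq_finrank' hcards
  let cR : Module.Basis (Fin r) k (LinearMap.range f) := Module.Basis.mk hur hspan_ur.ge
  obtain ⟨U, hU⟩ := Submodule.exists_isCompl (LinearMap.range f)
  have hUr : Module.finrank k U = m - r := by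
    have h2 := Submodule.finrank_add_eq_of_isCompl hU
    rw [hfinm] at h2; omega
  let bU : Module.Basis (Fin (m - r)) k U := Module.finBasisOfFinrankEq k U hUr
  let eWm : ((LinearMap.range f) × U) ≃ₗ[k] (Fin m → k) :=
    Submodule.prodEquivOfIsCompl _ _ hU
  let em : Fin r ⊕ Fin (m - r) ≃ Fin m := finSumFinEquiv.trans (finCongr (by omega))
  let c : Module.Basis (Fin m) k (Fin m → k) := ((cR.prod bU).map eWm).reindex em
  have hc_lt : ∀ (i : Fin m) (hi : (i : ℕ) < r), c i = u ⟨(i : ℕ), hi⟩ := by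
    intro i hi
    have he0 : em (Sum.inl ⟨(i : ℕ), hi⟩) = i := by apply Fin.ext; simp [em]
    have he : em.symm i = Sum.inl ⟨(i : ℕ), hi⟩ := em.symm_apply_eq.mpr he0.symm
    rw [Module.Basis.reindex_apply, he, Module.Basis.map_apply]
    have hp : (cR.prod bU) (Sum.inl ⟨(i : ℕ), hi⟩) = (cR ⟨(i : ℕ), hi⟩, 0) :=
      Prod.ext (Module.Basis.prod_apply_inl_fst _ _ _) (Module.Basis.prod_apply_inl_snd _ _ _)
    rw [hp, Submodule.coe_prodEquivOfIsCompl']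
    have : cR ⟨(i : ℕ), hi⟩ = ur ⟨(i : ℕ), hi⟩ := by
      simp [cR, Module.Basis.mk_apply]
    rw [this]
    simp [ur]
  -- the matrix of f in bases b, c is Emat
  have hEM : LinearMap.toMatrix b c f = Emat k m n r := by
    ext i j
    rw [LinearMap.toMatrix_apply]
    by_cases hj : (j : ℕ) < r
    · have hjm : (j : ℕ) < m := lt_of_lt_of_le hj hrlem
      have hfb : f (b j) = c ⟨(j : ℕ), hjm⟩ := by
        rw [hb_lt j hj, hc_lt ⟨(j : ℕ), hjm⟩ hj]
      rw [hfb, Module.Basis.repr_self, Finsupp.single_apply]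
      by_cases hij : (⟨(j : ℕ), hjm⟩ : Fin m) = i
      · have h1 : (i : ℕ) = (j : ℕ) := by rw [← hij]
        have h2 : (i : ℕ) < r := h1 ▸ hj
        simp [Emat, hij, h1, h2, hj]
      · have h1 : ¬ (i : ℕ) = (j : ℕ) := by
          intro hc; exact hij (Fin.ext hc.symm)
        simp [Emat, hij, h1]
    · have hfb : f (b j) = 0 := hb_ge j hj
      rw [hfb]
      have h1 : ¬ ((i : ℕ) = (j : ℕ) ∧ (i : ℕ) < r) := by
        rintro ⟨ha, hb2⟩; exact hj (ha ▸ hb2)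
      simp [Emat, h1]
  refine ⟨c.toMatrix bm, ?_, bn.toMatrix b, ?_, ?_⟩
  · exact IsUnit.of_mul_eq_one (bm.toMatrix c).det
      (by rw [← det_mul, Module.Basis.toMatrix_mul_toMatrix_flip, det_one])
  · exact IsUnit.of_mul_eq_one (b.toMatrix bn).det
      (by rw [← det_mul, Module.Basis.toMatrix_mul_toMatrix_flip, det_one])
  · have key := basis_toMatrix_mul_linearMap_toMatrix_mul_basis_toMatrix b bn c bm f
    have hM : LinearMap.toMatrix bn bm f = M := LinearMap.toMatrix_toLin bn bm M
    rw [hM] at key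
    rw [key, hEM]

/-- If `R ∈ M_{m×n}(k)` has `R_{1,1} = 1` and `rank R = r + 1`, then there are
`h₀ ∈ H_{1,m−1}(k)` and `g₀ ∈ H_{1,n−1}(k)` with `h₀ᵀ·R·g₀ = ((I_{r+1},0),(0,0))`. -/
theorem statement4 (k : Type*) [Field k] (m n r : ℕ) (hm : 0 < m) (hn : 0 < n)
    (R : Matrix (Fin m) (Fin n) k) (hR11 : R ⟨0, hm⟩ ⟨0, hn⟩ = 1)
    (hrank : R.rank = r + 1) :
    ∃ h₀ ∈ Hmir k m, ∃ g₀ ∈ Hmir k n,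
      h₀.transpose * R * g₀ =
        Matrix.of (fun (i : Fin m) (j : Fin n) =>
          if (i : ℕ) = (j : ℕ) ∧ (i : ℕ) < r + 1 then (1 : k) else 0) := by
  classical
  have hm1 : m = 1 + (m - 1) := by omega
  have hn1 : n = 1 + (n - 1) := by omega
  set i0 : Fin m := ⟨0, hm⟩ with hi0
  set j0 : Fin n := ⟨0, hn⟩ with hj0
  let em : Fin m ≃ Fin 1 ⊕ Fin (m - 1) := (finCongr hm1).trans finSumFinEquiv.symm
  let en : Fin n ≃ Fin 1 ⊕ Fin (n - 1) := (finCongr hn1).trans finSumFinEquiv.symm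
  have hem0 : ∀ i : Fin m, (i : ℕ) = 0 → em i = Sum.inl 0 := by
    intro i h
    have h1 : finCongr hm1 i = finSumFinEquiv (Sum.inl (0 : Fin 1)) := by
      apply Fin.ext; simp [h]
    show finSumFinEquiv.symm (finCongr hm1 i) = Sum.inl 0
    rw [h1, Equiv.symm_apply_apply]
  have hem1 : ∀ (i : Fin m) (h : (i : ℕ) ≠ 0), em i = Sum.inr ⟨(i : ℕ) - 1, by omega⟩ := by
    intro i h
    have h1 : finCongr hm1 i = finSumFinEquiv (Sum.inr (⟨(i : ℕ) - 1, by omega⟩ : Fin (m - 1))) := by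
      apply Fin.ext; simp; omega
    show finSumFinEquiv.symm (finCongr hm1 i) = Sum.inr _
    rw [h1, Equiv.symm_apply_apply]
  have hen0 : ∀ j : Fin n, (j : ℕ) = 0 → en j = Sum.inl 0 := by
    intro j h
    have h1 : finCongr hn1 j = finSumFinEquiv (Sum.inl (0 : Fin 1)) := by
      apply Fin.ext; simp [h]
    show finSumFinEquiv.symm (finCongr hn1 j) = Sum.inl 0
    rw [h1, Equiv.symm_apply_apply]
  have hen1 : ∀ (j : Fin n) (h : (j : ℕ) ≠ 0), en j = Sum.inr ⟨(j : ℕ) - 1, by omega⟩ := by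
    intro j h
    have h1 : finCongr hn1 j = finSumFinEquiv (Sum.inr (⟨(j : ℕ) - 1, by omega⟩ : Fin (n - 1))) := by
      apply Fin.ext; simp; omega
    show finSumFinEquiv.symm (finCongr hn1 j) = Sum.inr _
    rw [h1, Equiv.symm_apply_apply]
  set B : Matrix (Fin 1) (Fin (n - 1)) k :=
    Matrix.of (fun _ j => R i0 ⟨(j : ℕ) + 1, by omega⟩) with hB
  set C : Matrix (Fin (m - 1)) (Fin 1) k :=
    Matrix.of (fun i _ => R ⟨(i : ℕ) + 1, by omega⟩ j0) with hC
  set D : Matrix (Fin (m - 1)) (Fin (n - 1)) k :=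
    Matrix.of (fun i j => R ⟨(i : ℕ) + 1, by omega⟩ ⟨(j : ℕ) + 1, by omega⟩) with hD
  have hRblock : R = (fromBlocks 1 B C D).submatrix em en := by
    ext i j
    rw [submatrix_apply]
    by_cases hi : (i : ℕ) = 0 <;> by_cases hj : (j : ℕ) = 0
    · rw [hem0 i hi, hen0 j hj, fromBlocks_apply₁₁]
      have : i = i0 := Fin.ext hi
      have h2 : j = j0 := Fin.ext hj
      rw [this, h2, hR11, Matrix.one_apply_eq]
    · rw [hem0 i hi, hen1 j hj, fromBlocks_apply₁₂]
      show R i j = R i0 _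
      congr 1
      · exact Fin.ext hi
      · apply Fin.ext; simp; omega
    · rw [hem1 i hi, hen0 j hj, fromBlocks_apply₂₁]
      show R i j = R _ j0
      congr 1
      · apply Fin.ext; simp; omega
      · exact Fin.ext hj
    · rw [hem1 i hi, hen1 j hj, fromBlocks_apply₂₂]
      show R i j = R _ _
      congr 1
      · apply Fin.ext; simp; omega
      · apply Fin.ext; simp; omega
  set S' : Matrix (Fin (m - 1)) (Fin (n - 1)) k := D - C * B with hS'
  obtain ⟨P, hP, Q, hQ, hPQ⟩ := exists_PQ S'
  set r' := S'.rank with hr'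
  set Hb : Matrix (Fin 1 ⊕ Fin (m - 1)) (Fin 1 ⊕ Fin (m - 1)) k := fromBlocks 1 0 (-C) 1 with hHb
  set Gb : Matrix (Fin 1 ⊕ Fin (n - 1)) (Fin 1 ⊕ Fin (n - 1)) k := fromBlocks 1 (-B) 0 1 with hGb
  set Hb2 : Matrix (Fin 1 ⊕ Fin (m - 1)) (Fin 1 ⊕ Fin (m - 1)) k := fromBlocks 1 0 0 P with hHb2
  set Gb2 : Matrix (Fin 1 ⊕ Fin (n - 1)) (Fin 1 ⊕ Fin (n - 1)) k := fromBlocks 1 0 0 Q with hGb2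
  have hHH : Hb2 * Hb = fromBlocks 1 0 (-(P * C)) P := by
    rw [hHb2, hHb, fromBlocks_multiply]; simp
  have hGG : Gb * Gb2 = fromBlocks 1 (-(B * Q)) 0 Q := by
    rw [hGb, hGb2, fromBlocks_multiply]; simp
  have step1 : Hb * fromBlocks 1 B C D = fromBlocks 1 B 0 S' := by
    rw [hHb, fromBlocks_multiply, hS']; simp [sub_eq_neg_add]
  have step2 : (fromBlocks 1 B 0 S' : Matrix (Fin 1 ⊕ Fin (m - 1)) (Fin 1 ⊕ Fin (n - 1)) k) * Gb = fromBlocks 1 0 0 S' := by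
    rw [hGb, fromBlocks_multiply]; simp
  have step3 : Hb2 * (fromBlocks 1 0 0 S' : Matrix (Fin 1 ⊕ Fin (m - 1)) (Fin 1 ⊕ Fin (n - 1)) k) * Gb2 = fromBlocks 1 0 0 (P * S' * Q) := by
    rw [hHb2, hGb2, fromBlocks_multiply, fromBlocks_multiply]; simp [Matrix.mul_assoc]
  have hinner : (Hb2 * Hb) * fromBlocks 1 B C D * (Gb * Gb2)
      = fromBlocks 1 0 0 (Emat k (m - 1) (n - 1) r') := by
    calc (Hb2 * Hb) * fromBlocks 1 B C D * (Gb * Gb2)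
        = Hb2 * (Hb * fromBlocks 1 B C D * Gb) * Gb2 := by
          simp only [Matrix.mul_assoc]
      _ = Hb2 * (fromBlocks 1 0 0 S' : Matrix (Fin 1 ⊕ Fin (m - 1)) (Fin 1 ⊕ Fin (n - 1)) k) * Gb2 := by rw [step1, step2]
      _ = fromBlocks 1 0 0 (P * S' * Q) := step3
      _ = fromBlocks 1 0 0 (Emat k (m - 1) (n - 1) r') := by rw [hPQ]
  set h₀ : Matrix (Fin m) (Fin m) k := ((Hb2 * Hb).submatrix em em)ᵀ with hh₀
  set g₀ : Matrix (Fin n) (Fin n) k := (Gb * Gb2).submatrix en en with hg₀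
  have hfin : h₀ᵀ * R * g₀ = Emat k m n (r' + 1) := by
    rw [hh₀, transpose_transpose, hg₀, hRblock]
    rw [submatrix_mul_equiv (Hb2 * Hb) (fromBlocks 1 B C D) em em en]
    rw [submatrix_mul_equiv ((Hb2 * Hb) * fromBlocks 1 B C D) (Gb * Gb2) em en en]
    rw [hinner]
    ext i j
    rw [submatrix_apply]
    by_cases hi : (i : ℕ) = 0 <;> by_cases hj : (j : ℕ) = 0
    · rw [hem0 i hi, hen0 j hj, fromBlocks_apply₁₁, Matrix.one_apply_eq]
      simp [Emat, hi, hj]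
    · rw [hem0 i hi, hen1 j hj, fromBlocks_apply₁₂]
      have : ¬ ((i : ℕ) = (j : ℕ) ∧ (i : ℕ) < r' + 1) := by omega
      simp [Emat, this]; omega
    · rw [hem1 i hi, hen0 j hj, fromBlocks_apply₂₁]
      have : ¬ ((i : ℕ) = (j : ℕ) ∧ (i : ℕ) < r' + 1) := by omega
      simp [Emat, this]; omega
    · rw [hem1 i hi, hen1 j hj, fromBlocks_apply₂₂]
      show (Emat k (m - 1) (n - 1) r') _ _ = (Emat k m n (r' + 1)) i j
      unfold Emat
      rw [of_apply, of_apply]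
      have hiff : ((((⟨(i : ℕ) - 1, by omega⟩ : Fin (m - 1)) : ℕ)
            = ((⟨(j : ℕ) - 1, by omega⟩ : Fin (n - 1)) : ℕ))
            ∧ (((⟨(i : ℕ) - 1, by omega⟩ : Fin (m - 1)) : ℕ) < r'))
          ↔ ((i : ℕ) = (j : ℕ) ∧ (i : ℕ) < r' + 1) := by
        simp only []
        omega
      rw [if_congr hiff rfl rfl]
  -- determinants
  have hdX : IsUnit ((Hb2 * Hb).submatrix em em).det := by
    rw [det_submatrix_equiv_self, hHH, det_fromBlocks_zero₁₂]
    simpa using hP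
  have hdh : IsUnit h₀.det := by
    rw [hh₀, det_transpose]; exact hdX
  have hdht : IsUnit h₀ᵀ.det := by
    rw [det_transpose]; exact hdh
  have hdg : IsUnit g₀.det := by
    rw [hg₀, det_submatrix_equiv_self, hGG, det_fromBlocks_zero₂₁]
    simpa using hQ
  -- rank computation
  have hr'm : r' ≤ m - 1 := Matrix.rank_le_height S'
  have hr'n : r' ≤ n - 1 := Matrix.rank_le_width S'
  have hrEq : r' = r := by
    have h1 : (h₀ᵀ * R * g₀).rank = R.rank := by
      rw [Matrix.rank_mul_eq_left_of_isUnit_det g₀ (h₀ᵀ * R) hdg,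
        Matrix.rank_mul_eq_right_of_isUnit_det h₀ᵀ R hdht]
    rw [hfin, hrank, Emat_rank k (by omega) (by omega)] at h1
    omega
  refine ⟨h₀, ⟨hdh, ?_⟩, g₀, ⟨hdg, ?_⟩, ?_⟩
  · intro i j hj
    show ((Hb2 * Hb).submatrix em em)ᵀ i j = _
    rw [transpose_apply, submatrix_apply, hem0 j hj, hHH]
    by_cases hi : (i : ℕ) = 0
    · rw [hem0 i hi, fromBlocks_apply₁₁, Matrix.one_apply_eq]
      simp [hi]
    · rw [hem1 i hi, fromBlocks_apply₁₂]
      simp [hi]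
  · intro i j hj
    show (Gb * Gb2).submatrix en en i j = _
    rw [submatrix_apply, hen0 j hj, hGG]
    by_cases hi : (i : ℕ) = 0
    · rw [hen0 i hi, fromBlocks_apply₁₁, Matrix.one_apply_eq]
      simp [hi]
    · rw [hen1 i hi, fromBlocks_apply₂₁]
      simp [hi]
  · rw [hrEq] at hfin
    exact hfin
end

section
/- Let k be a field and m ≥ n ≥ 1. For all integers 0 ≤ r, ℓ ≤ n−1 with r ≠ ℓ, the double cosets P_{mn−1,1}(k)·ε_r·T_{m,n}(k) and P_{mn−1,1}(k)·ε_ℓ·T_{m,n}(k) are distinct; equivalently, there do not exist p ∈ P_{mn−1,1}(k), h ∈ GL_m(k), g ∈ GL_n(k) with ε_ℓ = p·ε_r·t(h,g). -/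
open Matrix

/-- `T_{m,n}(k)`: the image of the Kronecker product map on invertible matrices. -/
def TSet (k : Type*) [Field k] (m n : ℕ) : Set (Matrix (Fin (m * n)) (Fin (m * n)) k) :=
  {A | ∃ (h : Matrix (Fin m) (Fin m) k) (g : Matrix (Fin n) (Fin n) k),
    IsUnit h.det ∧ IsUnit g.det ∧ A = kron h g}

/-- The row vector `b_r ∈ k^{rn}` given by concatenating the standard basis row vectors
`e_{n-1}, e_{n-2}, …, e_{n-r}` of `k^n`: its block `p` (0-based) is `e_{n-1-p}`. -/
def bVec (k : Type*) [Field k] (n : ℕ) {M : ℕ} : Fin M → k :=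
  fun i => if (i : ℕ) % n + (i : ℕ) / n + 2 = n then 1 else 0

/-- The representative `ε_r := w_{(m−r)n} · u_{(m−r)n}(b_r) ∈ GL_{mn}(k)`. -/
def epsMat (k : Type*) [Field k] (m n r : ℕ) : Matrix (Fin (m * n)) (Fin (m * n)) k :=
  wMat k (m * n) ((m - r) * n) * uMat k (m * n) ((m - r) * n) (bVec k n)

/-- The double coset `P_{mn−1,1}(k) · A · T_{m,n}(k)`. -/
def dCoset (k : Type*) [Field k] (m n : ℕ) (A : Matrix (Fin (m * n)) (Fin (m * n)) k) :
    Set (Matrix (Fin (m * n)) (Fin (m * n)) k) :=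
  {X | ∃ p ∈ ParabP k (m * n), ∃ t ∈ TSet k m n, X = p * A * t}

section Aux
variable {k : Type*} [Field k] {m n : ℕ}

/-- reshape a row vector of length `m*n` into an `m × n` matrix. -/
def rsh (v : Fin (m * n) → k) : Matrix (Fin m) (Fin n) k :=
  Matrix.of fun a b => v (finProdFinEquiv (a, b))

lemma divNat_pair (a : Fin m) (b : Fin n) : (finProdFinEquiv (a, b)).divNat = a :=
  congrArg Prod.fst (finProdFinEquiv.symm_apply_apply (a, b))

lemma modNat_pair (a : Fin m) (b : Fin n) : (finProdFinEquiv (a, b)).modNat = b :=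
  congrArg Prod.snd (finProdFinEquiv.symm_apply_apply (a, b))

lemma rsh_vecMul_kron (v : Fin (m * n) → k) (h : Matrix (Fin m) (Fin m) k)
    (g : Matrix (Fin n) (Fin n) k) :
    rsh (Matrix.vecMul v (kron h g)) = hᵀ * rsh v * g := by
  ext a b
  have key : ∀ x : Fin (m * n), kron h g x (finProdFinEquiv (a, b))
      = h x.divNat a * g x.modNat b := by
    intro x; simp only [kron, Matrix.of_apply, divNat_pair, modNat_pair]
  have lhs : rsh (Matrix.vecMul v (kron h g)) a b
      = ∑ x : Fin (m * n), v x * (h x.divNat a * g x.modNat b) := by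
    simp only [rsh, Matrix.of_apply, Matrix.vecMul, dotProduct]
    exact Finset.sum_congr rfl fun x _ => by rw [key]
  rw [lhs, ← Fintype.sum_equiv finProdFinEquiv
      (fun p : Fin m × Fin n => v (finProdFinEquiv p) * (h p.1 a * g p.2 b))
      (fun x => v x * (h x.divNat a * g x.modNat b))
      (fun p => by obtain ⟨c, d⟩ := p; simp only [divNat_pair, modNat_pair])]
  rw [Matrix.mul_apply]
  simp only [Matrix.mul_apply, Matrix.transpose_apply, Finset.sum_mul]
  rw [Fintype.sum_prod_type, Finset.sum_comm]
  exact Finset.sum_congr rfl fun d _ => Finset.sum_congr rfl fun c _ => by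
    simp [rsh]; ring

lemma addmul_eq (A B C D : ℕ) (hB : B < n) (hD : D < n) (h : B + n * A = D + n * C) :
    A = C ∧ B = D := by
  have h1 : (B + n * A) % n = B := by
    rw [Nat.add_mul_mod_self_left, Nat.mod_eq_of_lt hB]
  have h2 : (D + n * C) % n = D := by
    rw [Nat.add_mul_mod_self_left, Nat.mod_eq_of_lt hD]
  have hBD : B = D := by rw [← h1, ← h2, h]
  have : n * A = n * C := by omega
  exact ⟨Nat.eq_of_mul_eq_mul_left (by omega) this, hBD⟩

/-- the entries of the last row of `ε_r`, reshaped. -/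
lemma eps_entry (hn : 1 ≤ n) (hnm : n ≤ m) (r : ℕ) (hr : r ≤ n - 1)
    (hL : m * n - 1 < m * n) (a : Fin m) (b : Fin n) :
    epsMat k m n r ⟨m * n - 1, hL⟩ (finProdFinEquiv (a, b))
      = if (a : ℕ) + (b : ℕ) + r + 2 = m + n then 1 else 0 := by
  set j := (m - r) * n with hj
  have hrm : r + 1 ≤ m := by omega
  have hj1 : 1 ≤ j := by
    have : 1 * 1 ≤ (m - r) * n := Nat.mul_le_mul (by omega) hn
    omega
  have hjN : j ≤ m * n := Nat.mul_le_mul_right n (by omega)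
  have hjsub : j = (m - r - 1) * n + n := by
    have ht : m - r - 1 + 1 = m - r := by omega
    calc (m - r) * n = (m - r - 1 + 1) * n := by rw [ht]
      _ = (m - r - 1) * n + n := by rw [add_mul, one_mul]
  have hjsub' : j = n * (m - r - 1) + n := by rw [hjsub, mul_comm]
  have hj2 : j = n * (m - r) := by rw [hj, mul_comm]
  have hx0 : j - 1 < m * n := by omega
  -- the last row of W is the indicator of column j-1
  have hW : ∀ x : Fin (m * n),
      wMat k (m * n) j ⟨m * n - 1, hL⟩ x = if (x : ℕ) = j - 1 then 1 else 0 := by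
    intro x
    simp only [wMat, Matrix.of_apply]
    have c1 : ¬ ((⟨m * n - 1, hL⟩ : Fin (m * n)) : ℕ) + 1 < j := by simp; omega
    have c2 : ¬ ((⟨m * n - 1, hL⟩ : Fin (m * n)) : ℕ) + 1 < m * n := by simp; omega
    rw [if_neg c1, if_neg c2]
  have step1 : epsMat k m n r ⟨m * n - 1, hL⟩ (finProdFinEquiv (a, b))
      = uMat k (m * n) j (bVec k n) ⟨j - 1, hx0⟩ (finProdFinEquiv (a, b)) := by
    rw [epsMat, Matrix.mul_apply]
    rw [Finset.sum_eq_single (⟨j - 1, hx0⟩ : Fin (m * n))]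
    · rw [hW, if_pos rfl, one_mul]
    · intro x _ hx
      rw [hW, if_neg, zero_mul]
      intro hc
      exact hx (Fin.ext hc)
    · intro hc; exact absurd (Finset.mem_univ _) hc
  rw [step1]
  -- now evaluate the u-matrix entry
  have hval : ((finProdFinEquiv (a, b) : Fin (m * n)) : ℕ) = (b : ℕ) + n * (a : ℕ) := rfl
  simp only [uMat, Matrix.of_apply, if_true]
  have ha := a.isLt
  have hb := b.isLt
  by_cases h1 : ((finProdFinEquiv (a, b) : Fin (m * n)) : ℕ) = j - 1
  · rw [if_pos h1]
    have heq : (b : ℕ) + n * (a : ℕ) = (n - 1) + n * (m - r - 1) := by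
      rw [← hval, h1]; omega
    obtain ⟨hA, hB⟩ := addmul_eq (a : ℕ) (b : ℕ) (m - r - 1) (n - 1) hb (by omega) heq
    rw [if_pos (by omega)]
  · rw [if_neg h1]
    by_cases h2 : j ≤ ((finProdFinEquiv (a, b) : Fin (m * n)) : ℕ)
    · rw [dif_pos h2]
      -- here  m - r ≤ a
      have hge : m - r ≤ (a : ℕ) := by
        by_contra hc
        push_neg at hc
        have : (b : ℕ) + n * (a : ℕ) ≤ (n - 1) + n * (m - r - 1) := by
          have : n * (a : ℕ) ≤ n * (m - r - 1) := Nat.mul_le_mul_left n (by omega)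
          omega
        rw [hval] at h2
        omega
      have hidx : ((finProdFinEquiv (a, b) : Fin (m * n)) : ℕ) - j
          = (b : ℕ) + n * ((a : ℕ) - (m - r)) := by
        rw [hval]
        have h3 : n * (a : ℕ) = n * ((a : ℕ) - (m - r)) + n * (m - r) := by
          rw [← Nat.mul_add]; congr 1; omega
        omega
      simp only [bVec]
      have hmod : ((b : ℕ) + n * ((a : ℕ) - (m - r))) % n = (b : ℕ) := by
        rw [Nat.add_mul_mod_self_left, Nat.mod_eq_of_lt hb]
      have hdiv : ((b : ℕ) + n * ((a : ℕ) - (m - r))) / n = (a : ℕ) - (m - r) := by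
        rw [Nat.add_mul_div_left _ _ (by omega : 0 < n), Nat.div_eq_of_lt hb, zero_add]
      show (if (((finProdFinEquiv (a, b) : Fin (m * n)) : ℕ) - j) % n
          + (((finProdFinEquiv (a, b) : Fin (m * n)) : ℕ) - j) / n + 2 = n then (1:k) else 0)
          = if (a : ℕ) + (b : ℕ) + r + 2 = m + n then 1 else 0
      rw [hidx, hmod, hdiv]
      congr 1
      simp only [eq_iff_iff]
      omega
    · rw [dif_neg h2]
      -- here a < m - r  and we are not at (m-r-1, n-1)
      push_neg at h2
      rw [hval] at h1 h2
      have hlt : (a : ℕ) ≤ m - r - 1 := by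
        by_contra hc
        push_neg at hc
        have : n * (m - r) ≤ n * (a : ℕ) := Nat.mul_le_mul_left n (by omega)
        omega
      rw [if_neg]
      intro hc
      -- a + b + r + 2 = m + n with a ≤ m-r-1 and b ≤ n-1 forces a = m-r-1, b = n-1
      have hA : (a : ℕ) = m - r - 1 := by omega
      have hB : (b : ℕ) = n - 1 := by omega
      apply h1
      rw [hA, hB]
      omega

end Aux

section Rank
variable {k : Type*} [Field k] {m n : ℕ}

lemma rank_anti (hn : 1 ≤ n) (hnm : n ≤ m) (r : ℕ) (hr : r ≤ n - 1) :
    (Matrix.of fun (a : Fin m) (b : Fin n) =>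
      if (a : ℕ) + (b : ℕ) + r + 2 = m + n then (1 : k) else 0).rank = r + 1 := by
  have hrm : r + 1 ≤ m := by omega
  have hrn : r + 1 ≤ n := by omega
  set V : Matrix (Fin m) (Fin n) k :=
    Matrix.of fun a b => if (a : ℕ) + (b : ℕ) + r + 2 = m + n then (1 : k) else 0 with hVdef
  set C : Matrix (Fin m) (Fin (r + 1)) k :=
    Matrix.of fun a c => if (a : ℕ) + r + 1 = m + (c : ℕ) then (1 : k) else 0 with hCdef
  set D : Matrix (Fin (r + 1)) (Fin n) k :=
    Matrix.of fun c b => if (c : ℕ) + (b : ℕ) + 1 = n then (1 : k) else 0 with hDdef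
  have hV : V = C * D := by
    ext a b
    have ha := a.isLt
    have hb := b.isLt
    rw [Matrix.mul_apply]
    show (if (a : ℕ) + (b : ℕ) + r + 2 = m + n then (1 : k) else 0) = _
    by_cases hc : (a : ℕ) + (b : ℕ) + r + 2 = m + n
    · have hca : n - 1 - (b : ℕ) < r + 1 := by omega
      rw [Finset.sum_eq_single (⟨n - 1 - (b : ℕ), hca⟩ : Fin (r + 1))]
      · rw [if_pos hc]
        show (1 : k) = (if (a : ℕ) + r + 1 = m + (n - 1 - (b : ℕ)) then (1 : k) else 0)
            * (if n - 1 - (b : ℕ) + (b : ℕ) + 1 = n then (1 : k) else 0)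
        rw [if_pos (by omega), if_pos (by omega), one_mul]
      · intro c _ hcc
        have hcr := c.isLt
        show (if (a : ℕ) + r + 1 = m + (c : ℕ) then (1 : k) else 0)
            * (if (c : ℕ) + (b : ℕ) + 1 = n then (1 : k) else 0) = 0
        rw [if_neg, zero_mul]
        intro h1
        exact hcc (Fin.ext (show (c : ℕ) = n - 1 - (b : ℕ) by omega))
      · intro hb'; exact absurd (Finset.mem_univ _) hb'
    · rw [if_neg hc]
      refine (Finset.sum_eq_zero fun c _ => ?_).symm
      have hcr := c.isLt
      show (if (a : ℕ) + r + 1 = m + (c : ℕ) then (1 : k) else 0)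
          * (if (c : ℕ) + (b : ℕ) + 1 = n then (1 : k) else 0) = 0
      by_cases h1 : (a : ℕ) + r + 1 = m + (c : ℕ)
      · rw [if_neg (show ¬((c : ℕ) + (b : ℕ) + 1 = n) by omega), mul_zero]
      · rw [if_neg h1, zero_mul]
  have hC : Cᵀ * C = 1 := by
    ext c c'
    have hcr := c.isLt
    have hcr' := c'.isLt
    rw [Matrix.mul_apply, Matrix.one_apply]
    rw [Finset.sum_eq_single (⟨m + (c : ℕ) - (r + 1), by omega⟩ : Fin m)]
    · show (if m + (c : ℕ) - (r + 1) + r + 1 = m + (c : ℕ) then (1 : k) else 0)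
          * (if m + (c : ℕ) - (r + 1) + r + 1 = m + (c' : ℕ) then (1 : k) else 0) = _
      rw [if_pos (by omega), one_mul]
      congr 1
      simp only [eq_iff_iff, Fin.ext_iff]
      omega
    · intro x _ hx
      show (if (x : ℕ) + r + 1 = m + (c : ℕ) then (1 : k) else 0)
          * (if (x : ℕ) + r + 1 = m + (c' : ℕ) then (1 : k) else 0) = 0
      rw [if_neg, zero_mul]
      intro h1
      exact hx (Fin.ext (show (x : ℕ) = m + (c : ℕ) - (r + 1) by omega))
    · intro hb'; exact absurd (Finset.mem_univ _) hb'
  have hD : D * Dᵀ = 1 := by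
    ext c c'
    have hcr := c.isLt
    have hcr' := c'.isLt
    rw [Matrix.mul_apply, Matrix.one_apply]
    rw [Finset.sum_eq_single (⟨n - 1 - (c : ℕ), by omega⟩ : Fin n)]
    · show (if (c : ℕ) + (n - 1 - (c : ℕ)) + 1 = n then (1 : k) else 0)
          * (if (c' : ℕ) + (n - 1 - (c : ℕ)) + 1 = n then (1 : k) else 0) = _
      rw [if_pos (by omega), one_mul]
      congr 1
      simp only [eq_iff_iff, Fin.ext_iff]
      omega
    · intro x _ hx
      show (if (c : ℕ) + (x : ℕ) + 1 = n then (1 : k) else 0)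
          * (if (c' : ℕ) + (x : ℕ) + 1 = n then (1 : k) else 0) = 0
      rw [if_neg, zero_mul]
      intro h1
      exact hx (Fin.ext (show (x : ℕ) = n - 1 - (c : ℕ) by omega))
    · intro hb'; exact absurd (Finset.mem_univ _) hb'
  have hupper : V.rank ≤ r + 1 := by
    rw [hV]
    exact le_trans (Matrix.rank_mul_le_right C D) (Matrix.rank_le_height D)
  have hlower : r + 1 ≤ V.rank := by
    have hone : Cᵀ * (V * Dᵀ) = 1 := by
      rw [hV, Matrix.mul_assoc C D Dᵀ, hD, Matrix.mul_one, hC]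
    have h2 : (Cᵀ * (V * Dᵀ)).rank ≤ V.rank :=
      le_trans (Matrix.rank_mul_le_right Cᵀ (V * Dᵀ)) (Matrix.rank_mul_le_left V Dᵀ)
    rw [hone, Matrix.rank_one, Fintype.card_fin] at h2
    exact h2
  omega

lemma kron_one_one : kron (1 : Matrix (Fin m) (Fin m) k) (1 : Matrix (Fin n) (Fin n) k) = 1 := by
  ext x y
  simp only [kron, Matrix.of_apply]
  have hx : x = finProdFinEquiv (x.divNat, x.modNat) := (finProdFinEquiv.apply_symm_apply x).symm
  have hy : y = finProdFinEquiv (y.divNat, y.modNat) := (finProdFinEquiv.apply_symm_apply y).symm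
  by_cases hxy : x = y
  · subst hxy
    rw [Matrix.one_apply_eq, Matrix.one_apply_eq, Matrix.one_apply_eq, one_mul]
  · rw [Matrix.one_apply_ne hxy]
    by_cases h1 : x.divNat = y.divNat
    · have h2 : x.modNat ≠ y.modNat := by
        intro h2
        exact hxy (by rw [hx, hy, h1, h2])
      rw [Matrix.one_apply_ne h2, mul_zero]
    · rw [Matrix.one_apply_ne h1, zero_mul]

end Rank

section Main
variable {k : Type*} [Field k] {m n : ℕ}

lemma no_rel (hn : 1 ≤ n) (hnm : n ≤ m) (r l : ℕ) (hr : r ≤ n - 1) (hl : l ≤ n - 1)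
    (hne : r ≠ l) :
    ¬ ∃ p ∈ ParabP k (m * n), ∃ (h : Matrix (Fin m) (Fin m) k) (g : Matrix (Fin n) (Fin n) k),
        IsUnit h.det ∧ IsUnit g.det ∧ epsMat k m n l = p * epsMat k m n r * kron h g := by
  rintro ⟨p, ⟨hpu, hpz⟩, h, g, hh, hg, heq⟩
  have hN : 0 < m * n := Nat.mul_pos (by omega) (by omega)
  set L : Fin (m * n) := ⟨m * n - 1, by omega⟩ with hL
  have hLval : (L : ℕ) = m * n - 1 := rfl
  set d := p L L with hd'
  have hd : d ≠ 0 := by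
    intro h0
    have hz : ∀ jj, p L jj = 0 := by
      intro jj
      by_cases hj : (jj : ℕ) = m * n - 1
      · have : jj = L := Fin.ext (by rw [hj, hLval])
        rw [this, ← hd', h0]
      · exact hpz L jj hLval hj
    rw [Matrix.det_eq_zero_of_row_eq_zero L hz] at hpu
    exact not_isUnit_zero hpu
  have hrow : ∀ y, epsMat k m n l L y
      = d * Matrix.vecMul (fun x => epsMat k m n r L x) (kron h g) y := by
    intro y
    rw [heq, Matrix.mul_assoc, Matrix.mul_apply]
    rw [Finset.sum_eq_single L]
    · rfl
    · intro x _ hx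
      rw [hpz L x hLval (fun hc => hx (Fin.ext (by rw [hc, hLval]))), zero_mul]
    · intro hb'; exact absurd (Finset.mem_univ _) hb'
  have hresh : rsh (fun y => epsMat k m n l L y)
      = d • (hᵀ * rsh (fun x => epsMat k m n r L x) * g) := by
    ext a b
    show epsMat k m n l L (finProdFinEquiv (a, b))
        = d * (hᵀ * rsh (fun x => epsMat k m n r L x) * g) a b
    rw [hrow]
    congr 1
    exact congrFun (congrFun (rsh_vecMul_kron (fun x => epsMat k m n r L x) h g) a) b
  have hVl : rsh (fun y => epsMat k m n l L y)
      = Matrix.of fun (a : Fin m) (b : Fin n) =>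
          if (a : ℕ) + (b : ℕ) + l + 2 = m + n then (1 : k) else 0 := by
    ext a b
    exact eps_entry hn hnm l hl (by omega) a b
  have hVr : rsh (fun x => epsMat k m n r L x)
      = Matrix.of fun (a : Fin m) (b : Fin n) =>
          if (a : ℕ) + (b : ℕ) + r + 2 = m + n then (1 : k) else 0 := by
    ext a b
    exact eps_entry hn hnm r hr (by omega) a b
  have hrankl : (rsh (fun y => epsMat k m n l L y)).rank = l + 1 := by
    rw [hVl]; exact rank_anti hn hnm l hl
  have hrankr : (rsh (fun y => epsMat k m n l L y)).rank = r + 1 := by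
    rw [hresh]
    have hd1 : IsUnit (d • (1 : Matrix (Fin m) (Fin m) k)).det := by
      rw [Matrix.det_smul, Matrix.det_one, mul_one]
      exact isUnit_iff_ne_zero.mpr (pow_ne_zero _ hd)
    have hsm : d • (hᵀ * rsh (fun x => epsMat k m n r L x) * g)
        = (d • (1 : Matrix (Fin m) (Fin m) k)) * (hᵀ * rsh (fun x => epsMat k m n r L x) * g) := by
      rw [Matrix.smul_mul, Matrix.one_mul]
    rw [hsm, Matrix.rank_mul_eq_right_of_isUnit_det _ _ hd1]
    rw [Matrix.rank_mul_eq_left_of_isUnit_det g _ hg]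
    rw [Matrix.rank_mul_eq_right_of_isUnit_det hᵀ _ (by rwa [Matrix.det_transpose])]
    rw [hVr]
    exact rank_anti hn hnm r hr
  rw [hrankl] at hrankr
  omega

end Main

/-- For `0 ≤ r, l ≤ n−1` with `r ≠ l`, the double cosets `P_{mn−1,1}(k)·ε_r·T_{m,n}(k)` and
`P_{mn−1,1}(k)·ε_l·T_{m,n}(k)` are distinct; equivalently there are no `p ∈ P_{mn−1,1}(k)`,
`h ∈ GL_m(k)`, `g ∈ GL_n(k)` with `ε_l = p·ε_r·t(h,g)`. -/
theorem statement7 (k : Type*) [Field k] (m n : ℕ) (hn : 1 ≤ n) (hnm : n ≤ m)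
    (r l : ℕ) (hr : r ≤ n - 1) (hl : l ≤ n - 1) (hne : r ≠ l) :
    dCoset k m n (epsMat k m n r) ≠ dCoset k m n (epsMat k m n l) ∧
    ¬ ∃ p ∈ ParabP k (m * n), ∃ (h : Matrix (Fin m) (Fin m) k) (g : Matrix (Fin n) (Fin n) k),
        IsUnit h.det ∧ IsUnit g.det ∧ epsMat k m n l = p * epsMat k m n r * kron h g := by
  refine ⟨?_, no_rel (k := k) hn hnm r l hr hl hne⟩
  intro hEq
  apply no_rel (k := k) hn hnm r l hr hl hne
  have h1P : (1 : Matrix (Fin (m * n)) (Fin (m * n)) k) ∈ ParabP k (m * n) :=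
    ⟨by rw [Matrix.det_one]; exact isUnit_one,
     fun i j hi hj => Matrix.one_apply_ne fun hc => hj (by rw [← hc, hi])⟩
  have h1T : (1 : Matrix (Fin (m * n)) (Fin (m * n)) k) ∈ TSet k m n :=
    ⟨1, 1, by rw [Matrix.det_one]; exact isUnit_one, by rw [Matrix.det_one]; exact isUnit_one,
     kron_one_one.symm⟩
  have hmem : epsMat k m n l ∈ dCoset k m n (epsMat k m n l) :=
    ⟨1, h1P, 1, h1T, by rw [one_mul, mul_one]⟩
  rw [← hEq] at hmem
  obtain ⟨p, hp, t, ⟨h, g, hh, hg, rfl⟩, heq⟩ := hmem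
  exact ⟨p, hp, h, g, hh, hg, heq⟩
end

section
/- Let n ≥ 2 and let t_1,…,t_{n−1} be real numbers with 0 < t_1 ≤ … ≤ t_{n−1} ≤ 1. Define φ_i = 1 + Σ_{j=i}^{n−1} t_j² for 1 ≤ i ≤ n (so φ_n = 1). Let M ∈ GL_n(ℝ) be the block matrix ((I_{n−1}, 0),(y, 1)) where y = (t_{n−1}, …, t_1) is the last row's first n−1 entries. Then there exist an upper triangular matrix y_P ∈ GL_n(ℝ) whose diagonal entries are, in order, √(φ_n/φ_{n−1}), √(φ_{n−1}/φ_{n−2}), …, √(φ_2/φ_1), √φ_1, and an orthogonal matrix y_K ∈ O(n), such that M = y_P·y_K. -/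
open Matrix

open Finset

noncomputable def psiA (y : ℕ → ℝ) (r : ℕ) : ℝ := 1 + ∑ j ∈ Finset.range r, y j ^ 2

lemma psiA_pos (y : ℕ → ℝ) (r : ℕ) : 0 < psiA y r := by
  have : 0 ≤ ∑ j ∈ Finset.range r, y j ^ 2 := Finset.sum_nonneg fun j _ => sq_nonneg _
  unfold psiA; linarith

lemma psiA_ne (y : ℕ → ℝ) (r : ℕ) : psiA y r ≠ 0 := (psiA_pos y r).ne'

lemma psiA_succ (y : ℕ → ℝ) (r : ℕ) : psiA y (r + 1) = psiA y r + y r ^ 2 := by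
  simp [psiA, Finset.sum_range_succ]; ring

lemma teleA_step (y : ℕ → ℝ) (b : ℕ) :
    y b ^ 2 / (psiA y b * psiA y (b + 1)) = 1 / psiA y b - 1 / psiA y (b + 1) := by
  have h1 := psiA_ne y b
  have h2 := psiA_ne y (b + 1)
  rw [psiA_succ] at h2 ⊢
  field_simp
  ring

lemma teleA (y : ℕ → ℝ) {a b : ℕ} (h : a ≤ b) :
    ∑ k ∈ Finset.Ico a b, y k ^ 2 / (psiA y k * psiA y (k + 1)) =
      1 / psiA y a - 1 / psiA y b := by
  induction b, h using Nat.le_induction with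
  | base => simp
  | succ b hb ih =>
    rw [Finset.sum_Ico_succ_top hb, ih, teleA_step]
    ring

noncomputable def sA (y : ℕ → ℝ) (k : ℕ) : ℝ := Real.sqrt (psiA y k * psiA y (k + 1))

lemma sA_pos (y : ℕ → ℝ) (k : ℕ) : 0 < sA y k :=
  Real.sqrt_pos.mpr (mul_pos (psiA_pos y k) (psiA_pos y (k + 1)))

lemma sA_ne (y : ℕ → ℝ) (k : ℕ) : sA y k ≠ 0 := (sA_pos y k).ne'

lemma sA_sq (y : ℕ → ℝ) (k : ℕ) : sA y k * sA y k = psiA y k * psiA y (k + 1) :=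
  Real.mul_self_sqrt (mul_nonneg (psiA_pos y k).le (psiA_pos y (k + 1)).le)

lemma sqrt_psiA_ne (y : ℕ → ℝ) (r : ℕ) : Real.sqrt (psiA y r) ≠ 0 :=
  (Real.sqrt_pos.mpr (psiA_pos y r)).ne'

lemma sqrt_psiA_sq (y : ℕ → ℝ) (r : ℕ) :
    Real.sqrt (psiA y r) * Real.sqrt (psiA y r) = psiA y r :=
  Real.mul_self_sqrt (psiA_pos y r).le

noncomputable def KfA (y : ℕ → ℝ) (m i j : ℕ) : ℝ :=
  if i = m then (if j = m then 1 else y j) / Real.sqrt (psiA y m)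
  else if j = m then -y i / sA y i
  else if j ≤ i then ((if j = i then psiA y (i + 1) else 0) - y i * y j) / sA y i
  else 0

noncomputable def PfA (y : ℕ → ℝ) (m i j : ℕ) : ℝ :=
  if i = m then (if j = m then Real.sqrt (psiA y m) else 0)
  else if j = m then y i / Real.sqrt (psiA y m)
  else if i ≤ j then ((if j = i then psiA y (i + 1) else 0) - y i * y j) / sA y j
  else 0

lemma range_sq_sum (y : ℕ → ℝ) (r : ℕ) :
    ∑ j ∈ Finset.range r, y j ^ 2 = psiA y r - 1 := by
  simp [psiA]

-- (K Kᵀ) at (m, m)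
lemma KK_mm (y : ℕ → ℝ) (m : ℕ) :
    ∑ k ∈ Finset.range (m + 1), KfA y m m k * KfA y m m k = 1 := by
  rw [Finset.sum_range_succ]
  have e1 : ∀ k ∈ Finset.range m, KfA y m m k * KfA y m m k = y k ^ 2 / psiA y m := by
    intro k hk
    have hkm : k ≠ m := (Finset.mem_range.mp hk).ne
    simp only [KfA, if_pos rfl, if_neg hkm, if_true, ite_true]
    rw [div_mul_div_comm, sqrt_psiA_sq, sq]
  rw [Finset.sum_congr rfl e1, ← Finset.sum_div, range_sq_sum]
  simp only [KfA, if_pos rfl, if_true, ite_true]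
  rw [div_mul_div_comm, sqrt_psiA_sq]
  field_simp
  rw [sub_add_cancel]
  exact div_self (psiA_ne y m)

-- (K Kᵀ) at (i, m), i < m
lemma KK_im (y : ℕ → ℝ) {m i : ℕ} (him : i < m) :
    ∑ k ∈ Finset.range (m + 1), KfA y m i k * KfA y m m k = 0 := by
  have hne : i ≠ m := him.ne
  rw [Finset.sum_range_succ]
  -- restrict the range-m sum to range (i+1)
  have hsub : Finset.range (i + 1) ⊆ Finset.range m := by
    intro x hx; simp only [Finset.mem_range] at *; omega
  have hzero : ∀ k ∈ Finset.range m, k ∉ Finset.range (i + 1) →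
      KfA y m i k * KfA y m m k = 0 := by
    intro k hk hk'
    simp only [Finset.mem_range] at hk hk'
    have h1 : ¬ (k ≤ i) := by omega
    have h2 : k ≠ m := by omega
    simp [KfA, hne, h1, h2]
  rw [← Finset.sum_subset hsub hzero]
  have e1 : ∀ k ∈ Finset.range (i + 1), KfA y m i k * KfA y m m k =
      (((if k = i then psiA y (i + 1) else 0) - y i * y k) * y k) /
        (sA y i * Real.sqrt (psiA y m)) := by
    intro k hk
    have hk1 : k ≤ i := by simpa [Nat.lt_succ_iff] using hk
    have hk2 : k ≠ m := by omega
    simp only [KfA, if_neg hne, if_neg hk2, if_pos hk1, if_pos rfl, if_true, ite_true]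
    rw [div_mul_div_comm]
  rw [Finset.sum_congr rfl e1, ← Finset.sum_div, Finset.sum_range_succ]
  have e2 : ∀ k ∈ Finset.range i,
      ((if k = i then psiA y (i + 1) else 0) - y i * y k) * y k = -(y i * y k ^ 2) := by
    intro k hk
    have : k ≠ i := (Finset.mem_range.mp hk).ne
    simp [this]; ring
  rw [Finset.sum_congr rfl e2, Finset.sum_neg_distrib, ← Finset.mul_sum, range_sq_sum]
  have hKmm : KfA y m i m * KfA y m m m = (-y i) / (sA y i * Real.sqrt (psiA y m)) := by
    simp only [KfA, if_neg hne, if_pos rfl, if_true, ite_true]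
    rw [div_mul_div_comm, mul_one]
  rw [hKmm, if_pos rfl, psiA_succ, ← add_div]
  have : -(y i * (psiA y i - 1)) + (psiA y i + y i ^ 2 - y i * y i) * y i + -y i = 0 := by ring
  rw [this, zero_div]

-- (K Kᵀ) at (i, j), j ≤ i < m
lemma KK_ij (y : ℕ → ℝ) {m i j : ℕ} (hj : j ≤ i) (him : i < m) :
    ∑ k ∈ Finset.range (m + 1), KfA y m i k * KfA y m j k =
      if j = i then 1 else 0 := by
  have hne : i ≠ m := him.ne
  have hjm : j ≠ m := by omega
  rw [Finset.sum_range_succ]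
  have hKm : KfA y m i m * KfA y m j m = (y i * y j) / (sA y i * sA y j) := by
    simp only [KfA, if_neg hne, if_neg hjm, if_pos rfl, ite_true]
    rw [div_mul_div_comm, neg_mul_neg]
  have hsub : Finset.range (j + 1) ⊆ Finset.range m := by
    intro x hx; simp only [Finset.mem_range] at *; omega
  have hzero : ∀ k ∈ Finset.range m, k ∉ Finset.range (j + 1) →
      KfA y m i k * KfA y m j k = 0 := by
    intro k hk hk'
    simp only [Finset.mem_range] at hk hk'
    have h1 : ¬ (k ≤ j) := by omega
    have h2 : k ≠ m := by omega
    simp [KfA, hjm, h1, h2]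
  rw [← Finset.sum_subset hsub hzero]
  have e1 : ∀ k ∈ Finset.range (j + 1), KfA y m i k * KfA y m j k =
      (((if k = i then psiA y (i + 1) else 0) - y i * y k) *
        ((if k = j then psiA y (j + 1) else 0) - y j * y k)) / (sA y i * sA y j) := by
    intro k hk
    have hk1 : k ≤ j := by simpa [Nat.lt_succ_iff] using hk
    have hk2 : k ≠ m := by omega
    have hk3 : k ≤ i := le_trans hk1 hj
    simp only [KfA, if_neg hne, if_neg hjm, if_neg hk2, if_pos hk1, if_pos hk3]
    rw [div_mul_div_comm]
  rw [Finset.sum_congr rfl e1, ← Finset.sum_div, Finset.sum_range_succ]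
  have e2 : ∀ k ∈ Finset.range j,
      ((if k = i then psiA y (i + 1) else 0) - y i * y k) *
        ((if k = j then psiA y (j + 1) else 0) - y j * y k) = y i * y j * y k ^ 2 := by
    intro k hk
    have h1 : k ≠ j := (Finset.mem_range.mp hk).ne
    have h2 : k ≠ i := by have := Finset.mem_range.mp hk; omega
    simp [h1, h2]; ring
  rw [Finset.sum_congr rfl e2, ← Finset.mul_sum, range_sq_sum, hKm, ← add_div,
    if_pos rfl]
  by_cases hji : j = i
  · subst hji
    rw [if_pos rfl, sA_sq]
    have hnum : y j * y j * (psiA y j - 1) +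
        (psiA y (j + 1) - y j * y j) * (psiA y (j + 1) - y j * y j) + y j * y j =
        psiA y j * psiA y (j + 1) := by
      rw [psiA_succ]; ring
    rw [hnum, div_self (mul_ne_zero (psiA_ne y j) (psiA_ne y (j + 1))), if_pos rfl]
  · rw [if_neg fun h => hji h, if_neg hji]
    have hnum : y i * y j * (psiA y j - 1) +
        (0 - y i * y j) * (psiA y (j + 1) - y j * y j) + y i * y j = 0 := by
      rw [psiA_succ]; ring
    rw [hnum, zero_div]

-- (P K) at (m, j)
lemma PK_m (y : ℕ → ℝ) (m j : ℕ) :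
    ∑ k ∈ Finset.range (m + 1), PfA y m m k * KfA y m k j =
      if j = m then 1 else y j := by
  rw [Finset.sum_range_succ]
  have e0 : ∀ k ∈ Finset.range m, PfA y m m k * KfA y m k j = 0 := by
    intro k hk
    have : k ≠ m := (Finset.mem_range.mp hk).ne
    simp [PfA, this]
  rw [Finset.sum_eq_zero e0, zero_add]
  simp only [PfA, KfA, if_pos rfl, ite_true]
  rw [mul_comm, div_mul_cancel₀ _ (sqrt_psiA_ne y m)]

-- (P K) at (i, m), i < m
lemma PK_im (y : ℕ → ℝ) {m i : ℕ} (him : i < m) :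
    ∑ k ∈ Finset.range (m + 1), PfA y m i k * KfA y m k m = 0 := by
  have hne : i ≠ m := him.ne
  rw [Finset.sum_range_succ]
  have hKm : PfA y m i m * KfA y m m m = y i * (1 / psiA y m) := by
    simp only [PfA, KfA, if_neg hne, if_pos rfl, ite_true]
    rw [div_mul_div_comm, sqrt_psiA_sq, mul_one, mul_one_div]
  have hsub : Finset.Ico i m ⊆ Finset.range m := by
    intro x hx; simp only [Finset.mem_Ico, Finset.mem_range] at *; omega
  have hzero : ∀ k ∈ Finset.range m, k ∉ Finset.Ico i m →
      PfA y m i k * KfA y m k m = 0 := by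
    intro k hk hk'
    simp only [Finset.mem_range, Finset.mem_Ico] at hk hk'
    have h1 : ¬ (i ≤ k) := by omega
    have h2 : k ≠ m := by omega
    simp [PfA, hne, h1, h2]
  rw [← Finset.sum_subset hsub hzero, Finset.sum_eq_sum_Ico_succ_bot him]
  have hdiag : PfA y m i i * KfA y m i m =
      (psiA y (i + 1) - y i * y i) * (-y i) / (psiA y i * psiA y (i + 1)) := by
    simp only [PfA, KfA, if_neg hne, if_pos rfl, if_pos (le_refl i), ite_true]
    rw [div_mul_div_comm, sA_sq]
  have e1 : ∀ k ∈ Finset.Ico (i + 1) m, PfA y m i k * KfA y m k m =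
      y i * (y k ^ 2 / (psiA y k * psiA y (k + 1))) := by
    intro k hk
    simp only [Finset.mem_Ico] at hk
    have h1 : k ≠ m := by omega
    have h2 : i ≤ k := by omega
    have h3 : k ≠ i := by omega
    simp only [PfA, KfA, if_neg hne, if_neg h1, if_neg h3, if_pos h2, if_pos rfl, ite_true]
    rw [div_mul_div_comm, sA_sq]
    ring
  rw [Finset.sum_congr rfl e1, ← Finset.mul_sum, teleA y (by omega : i + 1 ≤ m),
    hdiag, hKm, psiA_succ]
  have h1 := psiA_ne y i
  have h2 := psiA_ne y (i + 1)
  have h3 := psiA_ne y m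
  rw [psiA_succ] at h2
  field_simp
  ring

-- tail of the (P K) sum, telescoping part
lemma PK_tail (y : ℕ → ℝ) {m i j a : ℕ} (him : i ≠ m) (hjm : j ≠ m)
    (hia : i ≤ a) (hja : j ≤ a) (ham : a + 1 ≤ m) :
    ∑ k ∈ Finset.Ico (a + 1) m, PfA y m i k * KfA y m k j =
      y i * y j * (1 / psiA y (a + 1) - 1 / psiA y m) := by
  have e1 : ∀ k ∈ Finset.Ico (a + 1) m, PfA y m i k * KfA y m k j =
      y i * y j * (y k ^ 2 / (psiA y k * psiA y (k + 1))) := by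
    intro k hk
    simp only [Finset.mem_Ico] at hk
    have h1 : k ≠ m := by omega
    have h2 : i ≤ k := by omega
    have h3 : k ≠ i := by omega
    have h4 : j ≤ k := by omega
    have h5 : j ≠ k := by omega
    simp only [PfA, KfA, if_neg him, if_neg h1, if_neg h3, if_pos h2, if_neg hjm,
      if_pos h4, if_neg h5]
    rw [div_mul_div_comm, sA_sq]
    ring
  rw [Finset.sum_congr rfl e1, ← Finset.mul_sum, teleA y ham]

-- (P K) at (i, j), i < m, j < m
lemma PK_ij (y : ℕ → ℝ) {m i j : ℕ} (him : i < m) (hjm : j < m) :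
    ∑ k ∈ Finset.range (m + 1), PfA y m i k * KfA y m k j =
      if j = i then 1 else 0 := by
  have hne : i ≠ m := him.ne
  have hjne : j ≠ m := hjm.ne
  rw [Finset.sum_range_succ]
  have hKm : PfA y m i m * KfA y m m j = y i * y j * (1 / psiA y m) := by
    simp only [PfA, KfA, if_neg hne, if_neg hjne, if_pos rfl, ite_true]
    rw [div_mul_div_comm, sqrt_psiA_sq, mul_one_div]
  rw [hKm]
  rcases le_or_gt j i with hji | hij
  · -- a = i
    have hsub : Finset.Ico i m ⊆ Finset.range m := by
      intro x hx; simp only [Finset.mem_Ico, Finset.mem_range] at *; omega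
    have hzero : ∀ k ∈ Finset.range m, k ∉ Finset.Ico i m →
        PfA y m i k * KfA y m k j = 0 := by
      intro k hk hk'
      simp only [Finset.mem_range, Finset.mem_Ico] at hk hk'
      have h1 : ¬ (i ≤ k) := by omega
      have h2 : k ≠ m := by omega
      simp [PfA, hne, h1, h2]
    rw [← Finset.sum_subset hsub hzero, Finset.sum_eq_sum_Ico_succ_bot him,
      PK_tail y hne hjne (le_refl i) hji him]
    have hdiag : PfA y m i i * KfA y m i j =
        (psiA y (i + 1) - y i * y i) * ((if j = i then psiA y (i + 1) else 0) - y i * y j)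
          / (psiA y i * psiA y (i + 1)) := by
      simp only [PfA, KfA, if_neg hne, if_neg hjne, if_pos rfl, if_pos (le_refl i),
        if_pos hji, ite_true]
      rw [div_mul_div_comm, sA_sq]
    rw [hdiag]
    have h1 := psiA_ne y i
    have h2 := psiA_ne y (i + 1)
    have h3 := psiA_ne y m
    rw [psiA_succ] at h2 ⊢
    by_cases hj : j = i
    · subst hj
      rw [if_pos rfl, if_pos rfl]
      field_simp
      ring
    · rw [if_neg hj, if_neg hj]
      field_simp
      ring
  · -- a = j
    have hij' : j ≠ i := hij.ne'
    have hsub : Finset.Ico j m ⊆ Finset.range m := by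
      intro x hx; simp only [Finset.mem_Ico, Finset.mem_range] at *; omega
    have hzero : ∀ k ∈ Finset.range m, k ∉ Finset.Ico j m →
        PfA y m i k * KfA y m k j = 0 := by
      intro k hk hk'
      simp only [Finset.mem_range, Finset.mem_Ico] at hk hk'
      have h2 : k ≠ m := by omega
      rcases lt_or_ge k i with h | h
      · have h1 : ¬ (i ≤ k) := by omega
        simp [PfA, hne, h1, h2]
      · have h1 : ¬ (j ≤ k) := by omega
        simp [KfA, h2, h1, hjne]
    rw [← Finset.sum_subset hsub hzero, Finset.sum_eq_sum_Ico_succ_bot hjm,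
      PK_tail y hne hjne hij.le (le_refl j) hjm]
    have hdiag : PfA y m i j * KfA y m j j =
        (0 - y i * y j) * (psiA y (j + 1) - y j * y j) / (psiA y j * psiA y (j + 1)) := by
      simp only [PfA, KfA, if_neg hne, if_neg hjne, if_pos rfl, if_pos hij.le,
        if_pos (le_refl j), if_neg hij', ite_true]
      rw [div_mul_div_comm, sA_sq]
    rw [hdiag, if_neg hij']
    have h1 := psiA_ne y j
    have h2 := psiA_ne y (j + 1)
    have h3 := psiA_ne y m
    rw [psiA_succ] at h2 ⊢
    field_simp
    ring

lemma PfA_diag (y : ℕ → ℝ) (i : ℕ) :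
    (psiA y (i + 1) - y i * y i) / sA y i = Real.sqrt (psiA y i / psiA y (i + 1)) := by
  have h1 := psiA_pos y i
  have h2 := psiA_pos y (i + 1)
  have hnum : psiA y (i + 1) - y i * y i = psiA y i := by rw [psiA_succ]; ring
  rw [hnum, sA, Real.sqrt_mul h1.le, Real.sqrt_div h1.le,
    div_eq_div_iff (mul_pos (Real.sqrt_pos.mpr h1) (Real.sqrt_pos.mpr h2)).ne'
      (Real.sqrt_pos.mpr h2).ne', ← mul_assoc, Real.mul_self_sqrt h1.le]

/-- Let `M = ((I_{n−1},0),(y,1))` with `y = (t_{n−1},…,t_1)`, where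
`0 < t_1 ≤ … ≤ t_{n−1} ≤ 1`. Then `M = y_P · y_K` with `y_P` upper triangular invertible
with diagonal `√(φ_n/φ_{n−1}), …, √(φ_2/φ_1), √φ_1` and `y_K` orthogonal. -/
theorem statement12 (n : ℕ) (hn : 2 ≤ n) (t : ℕ → ℝ)
    (ht1 : 0 < t 1)
    (htmono : ∀ i, 1 ≤ i → i + 1 ≤ n - 1 → t i ≤ t (i + 1))
    (htlast : t (n - 1) ≤ 1)
    (φ : ℕ → ℝ)
    (hφ : ∀ a, 1 ≤ a → a ≤ n → φ a = 1 + ∑ j ∈ Finset.Icc a (n - 1), t j ^ 2)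
    (M : Matrix (Fin n) (Fin n) ℝ)
    (hM : ∀ i j : Fin n, M i j =
      if (i : ℕ) = n - 1 then (if (j : ℕ) = n - 1 then 1 else t (n - 1 - (j : ℕ)))
      else (if j = i then 1 else 0)) :
    ∃ yP yK : Matrix (Fin n) (Fin n) ℝ,
      IsUnit yP.det ∧
      (∀ i j : Fin n, (j : ℕ) < (i : ℕ) → yP i j = 0) ∧
      (∀ i : Fin n, yP i i =
        if (i : ℕ) = n - 1 then Real.sqrt (φ 1)
        else Real.sqrt (φ (n - (i : ℕ)) / φ (n - (i : ℕ) - 1))) ∧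
      yK * yK.transpose = 1 ∧ yK.transpose * yK = 1 ∧
      M = yP * yK := by
  obtain ⟨m, rfl⟩ : ∃ m, n = m + 1 := ⟨n - 1, by omega⟩
  have hm : 1 ≤ m := by omega
  simp only [Nat.add_sub_cancel] at hM hφ ⊢
  set y : ℕ → ℝ := fun j => t (m - j) with hy
  -- the link between φ and psiA
  have hphi : ∀ r : ℕ, r ≤ m → φ (m + 1 - r) = psiA y r := by
    intro r hr
    rw [hφ (m + 1 - r) (by omega) (by omega), psiA]
    congr 1
    refine Finset.sum_nbij' (fun j => m - j) (fun j => m - j) ?_ ?_ ?_ ?_ ?_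
    · intro a ha
      simp only [Finset.mem_Icc] at ha
      simp only [Finset.mem_range]; omega
    · intro a ha
      simp only [Finset.mem_range] at ha
      simp only [Finset.mem_Icc]; omega
    · intro a ha
      simp only [Finset.mem_Icc] at ha
      show m - (m - a) = a; omega
    · intro a ha
      simp only [Finset.mem_range] at ha
      show m - (m - a) = a; omega
    · intro a ha
      simp only [Finset.mem_Icc] at ha
      have : m - (m - a) = a := by omega
      rw [hy]
      simp only [this]
  set yP : Matrix (Fin (m + 1)) (Fin (m + 1)) ℝ :=
    Matrix.of fun i j : Fin (m + 1) => PfA y m i j with hP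
  set yK : Matrix (Fin (m + 1)) (Fin (m + 1)) ℝ :=
    Matrix.of fun i j : Fin (m + 1) => KfA y m i j with hK
  -- K is orthogonal
  have hKK : yK * yK.transpose = 1 := by
    ext i j
    rw [Matrix.mul_apply]
    simp only [hK, Matrix.transpose_apply, Matrix.of_apply]
    rw [Fin.sum_univ_eq_sum_range (fun k => KfA y m i k * KfA y m j k) (m + 1)]
    have hcomm : ∑ k ∈ Finset.range (m + 1), KfA y m i k * KfA y m j k =
        ∑ k ∈ Finset.range (m + 1), KfA y m j k * KfA y m i k :=
      Finset.sum_congr rfl fun k _ => mul_comm _ _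
    rcases eq_or_lt_of_le (Nat.lt_succ_iff.mp i.isLt) with hi | hi
    · rcases eq_or_lt_of_le (Nat.lt_succ_iff.mp j.isLt) with hj | hj
      · have hij : i = j := Fin.ext (by omega)
        rw [hi, hj, KK_mm, hij, Matrix.one_apply_eq]
      · rw [hcomm, hi, KK_im y (by omega : (j : ℕ) < m),
          Matrix.one_apply_ne (by intro h; rw [h] at hi; omega)]
    · rcases eq_or_lt_of_le (Nat.lt_succ_iff.mp j.isLt) with hj | hj
      · rw [hj, KK_im y (by omega : (i : ℕ) < m),
          Matrix.one_apply_ne (by intro h; rw [h] at hi; omega)]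
      · rcases le_or_gt (j : ℕ) (i : ℕ) with hji | hij
        · rw [KK_ij y hji hi]
          by_cases heq : (j : ℕ) = (i : ℕ)
          · rw [if_pos heq, (Fin.ext heq.symm : i = j), Matrix.one_apply_eq]
          · rw [if_neg heq, Matrix.one_apply_ne (fun h => heq (congrArg Fin.val h.symm))]
        · rw [hcomm, KK_ij y hij.le hj,
            if_neg (fun (h : (i : ℕ) = (j : ℕ)) => hij.ne h),
            Matrix.one_apply_ne (fun h => hij.ne (congrArg Fin.val h))]
  -- M = P K
  have hMPK : M = yP * yK := by
    ext i j
    rw [hM, Matrix.mul_apply]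
    simp only [hP, hK, Matrix.of_apply]
    rw [Fin.sum_univ_eq_sum_range (fun k => PfA y m i k * KfA y m k j) (m + 1)]
    by_cases hi : (i : ℕ) = m
    · rw [hi, PK_m, if_pos rfl]
    · have him : (i : ℕ) < m := by omega
      rw [if_neg hi]
      by_cases hj : (j : ℕ) = m
      · rw [hj, PK_im y him,
          if_neg (fun (h : j = i) => hi (by rw [← congrArg Fin.val h]; exact hj))]
      · have hjm : (j : ℕ) < m := by omega
        rw [PK_ij y him hjm]
        by_cases heq : j = i
        · rw [if_pos heq, if_pos (congrArg Fin.val heq)]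
        · rw [if_neg heq, if_neg (fun h => heq (Fin.ext h))]
  -- determinant of M is 1
  have hMtri : M.BlockTriangular OrderDual.toDual := by
    intro i j hij
    have hij' : (i : ℕ) < (j : ℕ) := hij
    rw [hM, if_neg (by omega : ¬ (i : ℕ) = m),
      if_neg (fun (h : j = i) => absurd (congrArg Fin.val h) (by omega))]
  have hdetM : M.det = 1 := by
    rw [Matrix.det_of_lowerTriangular M hMtri]
    apply Finset.prod_eq_one
    intro i _
    rw [hM]
    by_cases hv : (i : ℕ) = m
    · simp [hv]
    · simp [hv]
  have hdetP : IsUnit yP.det := by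
    apply IsUnit.of_mul_eq_one (a := yP.det) yK.det
    rw [← Matrix.det_mul, ← hMPK, hdetM]
  refine ⟨yP, yK, hdetP, ?_, ?_, hKK, mul_eq_one_comm.mp hKK, hMPK⟩
  · -- upper triangular
    intro i j hji
    have hj : (j : ℕ) ≠ m := by omega
    have hij : ¬ ((i : ℕ) ≤ (j : ℕ)) := by omega
    by_cases hi : (i : ℕ) = m
    · simp [hP, PfA, hi, hj]
    · show PfA y m (i : ℕ) (j : ℕ) = 0
      rw [PfA, if_neg hi, if_neg hj, if_neg hij]
  · -- diagonal
    intro i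
    by_cases hi : (i : ℕ) = m
    · rw [if_pos hi]
      have h1 : φ 1 = psiA y m := by
        have := hphi m (le_refl m)
        simpa using this
      simp [hP, PfA, hi, h1]
    · rw [if_neg hi]
      have him : (i : ℕ) < m := by omega
      have e1 : φ (m + 1 - (i : ℕ)) = psiA y i := hphi i him.le
      have e2 : φ (m + 1 - (i : ℕ) - 1) = psiA y ((i : ℕ) + 1) := by
        have : m + 1 - (i : ℕ) - 1 = m + 1 - ((i : ℕ) + 1) := by omega
        rw [this, hphi ((i : ℕ) + 1) (by omega)]
      rw [e1, e2]
      have : yP i i = (psiA y ((i : ℕ) + 1) - y i * y i) / sA y i := by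
        simp [hP, PfA, hi]
      rw [this, PfA_diag]
end
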